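/- arXiv:1509.02493 — 9 statements merged into one kernel-verified Lean document; each statement's English description precedes it below -/
import Mathlib

section
/- Let T be a Banach limit on ℓ^∞. Then there is no bounded linear operator T_Y : ℓ^∞(c₀) → c₀ satisfying ⟨y*, T_Y f⟩ = T(⟨y*, f⟩) for all f ∈ ℓ^∞(c₀) and y* ∈ ℓ¹ = (c₀)*. In other words, T admits no c₀-valued extension with respect to the pairing ⟨(c₀)*, c₀⟩. -/
open Filter Topology ZeroAtInfty

/-- A Banach limit: a bounded linear functional on `ℓ^∞` that extends the limit on
convergent sequences, is positive, and is shift-invariant. -/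
def IsBanachLimit (Λ : lp (fun _ : ℕ => ℝ) ⊤ →L[ℝ] ℝ) : Prop :=
  (∀ (x : lp (fun _ : ℕ => ℝ) ⊤) (l : ℝ),
      Tendsto (fun n => x n) atTop (𝓝 l) → Λ x = l) ∧
  (∀ x : lp (fun _ : ℕ => ℝ) ⊤, (∀ n, 0 ≤ x n) → 0 ≤ Λ x) ∧
  (∀ x y : lp (fun _ : ℕ => ℝ) ⊤, (∀ n, y n = x (n + 1)) → Λ y = Λ x)

/-- The indicator of `{k : k ≤ n}` as an element of `C₀(ℕ, ℝ)`. -/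
noncomputable def indC0 (n : ℕ) : C₀(ℕ, ℝ) :=
  { toFun := fun k => if k ≤ n then (1 : ℝ) else 0
    continuous_toFun := continuous_of_discreteTopology
    zero_at_infty' := by
      rw [cocompact_eq_atTop]
      refine Tendsto.congr' ?_ tendsto_const_nhds
      filter_upwards [Filter.eventually_atTop.2 ⟨n + 1, fun k hk => hk⟩] with k hk
      simp [Nat.not_le_of_lt (Nat.lt_of_succ_le hk)] }

theorem indC0_apply (n k : ℕ) : indC0 n k = if k ≤ n then (1 : ℝ) else 0 := rfl

theorem indC0_norm_le (n : ℕ) : ‖indC0 n‖ ≤ 1 := by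
  rw [← ZeroAtInftyContinuousMap.norm_toBCF_eq_norm]
  refine BoundedContinuousFunction.norm_le (by norm_num) |>.2 fun k => ?_
  by_cases h : k ≤ n <;> simp [indC0_apply, h]

/-- **A Banach limit has no `c₀`-valued extension.** If `T` is a Banach limit on `ℓ^∞`,
then there is no bounded linear operator `T_Y : ℓ^∞(c₀) → c₀` satisfying
`⟨y*, T_Y f⟩ = T ⟨y*, f⟩` for all `f ∈ ℓ^∞(c₀)` and all `y* ∈ ℓ¹ = (c₀)*`. -/
theorem banach_limit_no_c0_extension (T : lp (fun _ : ℕ => ℝ) ⊤ →L[ℝ] ℝ)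
    (hT : IsBanachLimit T) :
    ¬ ∃ TY : lp (fun _ : ℕ => C₀(ℕ, ℝ)) ⊤ →L[ℝ] C₀(ℕ, ℝ),
      ∀ (f : lp (fun _ : ℕ => C₀(ℕ, ℝ)) ⊤) (a : lp (fun _ : ℕ => ℝ) 1)
        (g : lp (fun _ : ℕ => ℝ) ⊤),
        (∀ n : ℕ, g n = ∑' k : ℕ, a k * (f n) k) →
        ∑' k : ℕ, a k * (TY f) k = T g := by
  rintro ⟨TY, hTY⟩
  -- the element `f` of `ℓ^∞(c₀)`
  have hfmem : Memℓp (fun n => indC0 n) (⊤ : ENNReal) := by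
    apply memℓp_infty
    refine ⟨1, ?_⟩
    rintro x ⟨n, rfl⟩
    exact indC0_norm_le n
  set f : lp (fun _ : ℕ => C₀(ℕ, ℝ)) ⊤ := ⟨fun n => indC0 n, hfmem⟩ with hf
  -- claim : (TY f) k = 1 for all k
  have key : ∀ k : ℕ, (TY f) k = 1 := by
    intro k
    -- a = e_k
    set a : lp (fun _ : ℕ => ℝ) 1 := lp.single 1 k 1 with ha
    have ha_apply : ∀ j, a j = if j = k then (1 : ℝ) else 0 := by
      intro j
      by_cases h : j = k
      · subst h; simp [ha, lp.single_apply_self]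
      · simp [ha, lp.single_apply_ne 1 k _ h, h]
    -- g
    have hgmem : Memℓp (fun n => if k ≤ n then (1 : ℝ) else 0) (⊤ : ENNReal) := by
      apply memℓp_infty
      refine ⟨1, ?_⟩
      rintro x ⟨n, rfl⟩
      by_cases h : k ≤ n <;> simp [h]
    set g : lp (fun _ : ℕ => ℝ) ⊤ := ⟨fun n => if k ≤ n then (1 : ℝ) else 0, hgmem⟩ with hg
    have tsum_eq : ∀ x : ℕ → ℝ, ∑' j : ℕ, a j * x j = x k := by
      intro x
      rw [tsum_eq_single k]
      · rw [ha_apply]; simp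
      · intro j hj
        rw [ha_apply]; simp [hj]
    have hgf : ∀ n : ℕ, g n = ∑' j : ℕ, a j * (f n) j := by
      intro n
      rw [tsum_eq]
      rfl
    have h1 := hTY f a g hgf
    rw [tsum_eq] at h1
    have hTg : T g = 1 := by
      refine hT.1 g 1 ?_
      refine Tendsto.congr' ?_ tendsto_const_nhds
      filter_upwards [Filter.eventually_atTop.2 ⟨k, fun n hn => hn⟩] with n hn
      show _ = (if k ≤ n then (1 : ℝ) else 0)
      simp [hn]
    rw [hTg] at h1
    exact h1
  -- contradiction with zero at infinity
  have h0 : Tendsto (fun k => (TY f) k) atTop (𝓝 (0 : ℝ)) := by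
    have := (TY f).zero_at_infty'
    rwa [cocompact_eq_atTop] at this
  have h1 : Tendsto (fun k => (TY f) k) atTop (𝓝 (1 : ℝ)) := by
    simp only [key]; exact tendsto_const_nhds
  exact zero_ne_one (tendsto_nhds_unique h0 h1)
end

section
/- Let T be a Banach limit on ℓ^∞. Then there is no bounded linear operator T_Y : ℓ^∞(ℓ¹) → ℓ¹ satisfying ⟨y*, T_Y f⟩ = T(⟨y*, f⟩) for all f ∈ ℓ^∞(ℓ¹) and y* ∈ ℓ^∞ = (ℓ¹)*. -/
open Filter Topology

/-!
Apply `T_Y` to the sequence `f n = eₙ` of unit vectors of `ℓ¹`. Pairing with `y* = eⱼ` gives the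
scalar sequence `n ↦ [n = j]`, which tends to `0`, so every coordinate of `T_Y f` vanishes. Pairing
with `y* = 1` gives the constant sequence `1`, so `∑ₖ (T_Y f) k = T 1 = 1`, a contradiction.
-/

section

variable {α : Type*} [DecidableEq α] (p : ENNReal)

lemma tsum_lpSingle_one_mul (i : α) (v : α → ℝ) :
    ∑' k, lp.single (E := fun _ => ℝ) p i 1 k * v k = v i := by
  simp [lp.single_apply, Pi.single_apply]

lemma tsum_mul_lpSingle_one (i : α) (y : α → ℝ) :
    ∑' k, y k * lp.single (E := fun _ => ℝ) p i 1 k = y i := by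
  simp [lp.single_apply, Pi.single_apply]

end

namespace IsBanachLimit

variable {Λ : lp (fun _ : ℕ => ℝ) ⊤ →L[ℝ] ℝ}

lemma map_one (hΛ : IsBanachLimit Λ) : Λ 1 = 1 :=
  hΛ.1 1 1 (by simp [lp.infty_coeFn_one])

lemma map_lpSingle (hΛ : IsBanachLimit Λ) (i : ℕ) (c : ℝ) : Λ (lp.single ⊤ i c) = 0 := by
  refine hΛ.1 _ 0 (tendsto_const_nhds.congr' ?_)
  filter_upwards [eventually_gt_atTop i] with n hn
  simp [lp.single_apply, hn.ne']

end IsBanachLimit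

noncomputable def ell1BasisSeq : lp (fun _ : ℕ => lp (fun _ : ℕ => ℝ) 1) ⊤ :=
  ⟨fun n => lp.single 1 n 1, memℓp_infty ⟨1, by
    rintro _ ⟨n, rfl⟩
    simp [lp.norm_single]⟩⟩

/-- **A Banach limit has no `ℓ¹`-valued extension with respect to `⟨ℓ^∞, ℓ¹⟩`.**
If `T` is a Banach limit on `ℓ^∞`, then there is no bounded linear operator
`T_Y : ℓ^∞(ℓ¹) → ℓ¹` satisfying `⟨y*, T_Y f⟩ = T ⟨y*, f⟩` for all `f ∈ ℓ^∞(ℓ¹)`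
and all `y* ∈ ℓ^∞ = (ℓ¹)*`. -/
theorem banach_limit_no_ell1_extension (T : lp (fun _ : ℕ => ℝ) ⊤ →L[ℝ] ℝ)
    (hT : IsBanachLimit T) :
    ¬ ∃ TY : lp (fun _ : ℕ => lp (fun _ : ℕ => ℝ) 1) ⊤ →L[ℝ] lp (fun _ : ℕ => ℝ) 1,
      ∀ (f : lp (fun _ : ℕ => lp (fun _ : ℕ => ℝ) 1) ⊤)
        (y : lp (fun _ : ℕ => ℝ) ⊤) (g : lp (fun _ : ℕ => ℝ) ⊤),
        (∀ n : ℕ, g n = ∑' k : ℕ, y k * (f n) k) →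
        ∑' k : ℕ, y k * (TY f) k = T g := by
  rintro ⟨TY, hTY⟩
  have pairing (y : lp (fun _ : ℕ => ℝ) ⊤) :=
    hTY ell1BasisSeq y y fun n => (tsum_mul_lpSingle_one 1 n y).symm
  have coord_eq_zero (j : ℕ) : TY ell1BasisSeq j = 0 := by
    simpa only [tsum_lpSingle_one_mul, hT.map_lpSingle] using pairing (lp.single ⊤ j 1)
  simpa [lp.infty_coeFn_one, coord_eq_zero, hT.map_one] using pairing 1
end

section
/- Let E, G be Banach lattices of measurable functions (Banach function spaces), T : E → G a linear operator, R : E → G a positive bounded linear operator dominating T (i.e., |Te| ≤ R|e| for all e ∈ E), Y a Banach space, and f₁,…,f_n ∈ E, y₁,…,y_n ∈ Y. Then for almost every point a, ‖∑_{j=1}^n (Tf_j)(a) y_j‖_Y ≤ R(a ↦ ‖∑_{j=1}^n f_j(a) y_j‖_Y)(a); i.e., the pointwise Y-norm of the tensor extension (T ⊗ I_Y)(∑ f_j ⊗ y_j) is dominated pointwise a.e. by R applied to the pointwise Y-norm of ∑ f_j ⊗ y_j. -/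
open MeasureTheory

/-- A (model of a) Banach function space on a measure space: a Banach lattice `E`
together with an injective lattice-respecting linear embedding `ι` into `L⁰(μ)`
whose range is an order ideal. -/
structure IsBanachFunctionSpace {α : Type*} [MeasurableSpace α] (μ : Measure α)
    (E : Type*) [NormedAddCommGroup E] [Lattice E] [IsOrderedAddMonoid E] [HasSolidNorm E] [NormedSpace ℝ E] [CompleteSpace E]
    (ι : E →ₗ[ℝ] (α →ₘ[μ] ℝ)) : Prop where
  inj : Function.Injective ι
  map_abs : ∀ e : E, ⇑(ι |e|) =ᵐ[μ] fun a => |(ι e) a|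
  ideal : ∀ (f : α →ₘ[μ] ℝ) (e : E), (∀ᵐ a ∂μ, |f a| ≤ |(ι e) a|) → ∃ e' : E, ι e' = f

/-!
Testing against a functional `φ` with `‖φ‖ ≤ 1` turns the vector-valued claim into a scalar one:
`u = ∑ⱼ φ(yⱼ) fⱼ` satisfies `|u| ≤ e` pointwise, hence `|T u| ≤ R |u| ≤ R e`, and `T u` evaluates
at `b` to `φ (∑ⱼ (T fⱼ)(b) yⱼ)`. These vectors lie in the finite-dimensional span of the `yⱼ`,
on which the norm is a supremum over countably many such `φ`, so only countably many null sets
are discarded.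
-/

theorem exists_countable_norming_set {Y : Type*} [NormedAddCommGroup Y] [NormedSpace ℝ Y]
    {S : Set Y} (hS : TopologicalSpace.IsSeparable S) :
    ∃ D : Set (StrongDual ℝ Y), D.Countable ∧ (∀ φ ∈ D, ‖φ‖ ≤ 1) ∧
      ∀ x ∈ S, ∀ M : ℝ, (∀ φ ∈ D, φ x ≤ M) → ‖x‖ ≤ M := by
  obtain ⟨c, hc, hSc⟩ := hS
  choose φ hφ_norm hφ_apply using fun z : Y => exists_dual_vector'' ℝ z
  refine ⟨φ '' c, hc.image φ, Set.forall_mem_image.2 fun z _ => hφ_norm z, ?_⟩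
  intro x hx M hM
  refine le_of_forall_pos_le_add fun ε hε => ?_
  obtain ⟨z, hzc, hxz⟩ := Metric.mem_closure_iff.1 (hSc hx) (ε / 2) (half_pos hε)
  rw [dist_eq_norm] at hxz
  have hz : ‖z‖ ≤ M + ‖x - z‖ :=
    calc ‖z‖ = φ z x + φ z (z - x) := by rw [map_sub, add_sub_cancel, hφ_apply]; rfl
      _ ≤ M + ‖φ z‖ * ‖z - x‖ :=
        add_le_add (hM _ ⟨z, hzc, rfl⟩) ((le_abs_self _).trans ((φ z).le_opNorm _))
      _ ≤ M + ‖x - z‖ := by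
        rw [norm_sub_rev]
        gcongr
        exact mul_le_of_le_one_left (norm_nonneg _) (hφ_norm z)
  calc ‖x‖ ≤ ‖z‖ + ‖x - z‖ := norm_le_norm_add_norm_sub' x z
    _ ≤ M + ε := by linarith

theorem MeasureTheory.AEEqFun.coeFn_map_sum_smul {α E Y κ : Type*} [MeasurableSpace α]
    {μ : Measure α} [AddCommGroup E] [Module ℝ E] [NormedAddCommGroup Y] [NormedSpace ℝ Y]
    (ι : E →ₗ[ℝ] (α →ₘ[μ] ℝ)) (φ : StrongDual ℝ Y) (s : Finset κ) (f : κ → E) (y : κ → Y) :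
    ⇑(ι (∑ j ∈ s, φ (y j) • f j)) =ᵐ[μ] fun a => φ (∑ j ∈ s, ι (f j) a • y j) := by
  simp only [map_sum, map_smul]
  filter_upwards [AEEqFun.coeFn_fun_finsetSum s fun j => φ (y j) • ι (f j),
    (s.eventually_all).2 fun j _ => AEEqFun.coeFn_smul (φ (y j)) (ι (f j))] with a hsum hsmul
  rw [hsum]
  refine Finset.sum_congr rfl fun j hj => ?_
  rw [hsmul j hj, Pi.smul_apply, smul_eq_mul, smul_eq_mul, mul_comm]

namespace IsBanachFunctionSpace

variable {α E : Type*} [MeasurableSpace α] {μ : Measure α}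
  [NormedAddCommGroup E] [Lattice E] [IsOrderedAddMonoid E] [HasSolidNorm E] [NormedSpace ℝ E]
  [CompleteSpace E] {ι : E →ₗ[ℝ] (α →ₘ[μ] ℝ)}

theorem nonneg_iff_ae (h : IsBanachFunctionSpace μ E ι) {d : E} :
    0 ≤ d ↔ ∀ᵐ a ∂μ, 0 ≤ ι d a := by
  constructor
  · intro hd
    filter_upwards [h.map_abs d] with a ha
    rw [← abs_of_nonneg hd, ha]
    exact abs_nonneg _
  · intro hd
    have habs : ι |d| = ι d := AEEqFun.ext <| by
      filter_upwards [h.map_abs d, hd] with a ha had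
      rw [ha, abs_of_nonneg had]
    exact h.inj habs ▸ abs_nonneg d

theorem le_iff_ae (h : IsBanachFunctionSpace μ E ι) {d d' : E} :
    d ≤ d' ↔ ∀ᵐ a ∂μ, ι d a ≤ ι d' a := by
  rw [← sub_nonneg, h.nonneg_iff_ae, map_sub]
  refine Filter.eventually_congr ?_
  filter_upwards [AEEqFun.coeFn_sub (ι d') (ι d)] with a ha
  rw [ha, Pi.sub_apply, sub_nonneg]

theorem abs_le_iff_ae (h : IsBanachFunctionSpace μ E ι) {d d' : E} :
    |d| ≤ d' ↔ ∀ᵐ a ∂μ, |ι d a| ≤ ι d' a := by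
  rw [h.le_iff_ae]
  refine Filter.eventually_congr ?_
  filter_upwards [h.map_abs d] with a ha
  rw [ha]

end IsBanachFunctionSpace

theorem ae_dual_apply_sum_smul_le
    {α β E G Y : Type*} [MeasurableSpace α] [MeasurableSpace β] {μ : Measure α} {ν : Measure β}
    [NormedAddCommGroup E] [Lattice E] [IsOrderedAddMonoid E] [HasSolidNorm E] [NormedSpace ℝ E]
    [CompleteSpace E]
    [NormedAddCommGroup G] [Lattice G] [IsOrderedAddMonoid G] [HasSolidNorm G] [NormedSpace ℝ G]
    [CompleteSpace G] [NormedAddCommGroup Y] [NormedSpace ℝ Y]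
    {ιE : E →ₗ[ℝ] (α →ₘ[μ] ℝ)} {ιG : G →ₗ[ℝ] (β →ₘ[ν] ℝ)}
    (hE : IsBanachFunctionSpace μ E ιE) (hG : IsBanachFunctionSpace ν G ιG)
    {T : E →ₗ[ℝ] G} {R : E →L[ℝ] G} (hRpos : ∀ e : E, 0 ≤ e → 0 ≤ R e)
    (hdom : ∀ e : E, |T e| ≤ R |e|) {κ : Type*} (s : Finset κ) (f : κ → E) (y : κ → Y) {e : E}
    (he : (fun a => ‖∑ j ∈ s, ιE (f j) a • y j‖) =ᵐ[μ] ⇑(ιE e))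
    {φ : StrongDual ℝ Y} (hφ : ‖φ‖ ≤ 1) :
    ∀ᵐ b ∂ν, φ (∑ j ∈ s, ιG (T (f j)) b • y j) ≤ ιG (R e) b := by
  set u := ∑ j ∈ s, φ (y j) • f j
  have hu : |u| ≤ e := by
    rw [hE.abs_le_iff_ae]
    filter_upwards [AEEqFun.coeFn_map_sum_smul ιE φ s f y, he] with a hua hea
    rw [hua, ← hea]
    exact (φ.le_opNorm _).trans (mul_le_of_le_one_left (norm_nonneg _) hφ)
  have hTu : |T u| ≤ R e := (hdom u).trans ((monotone_iff_map_nonneg R).2 hRpos hu)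
  have hTu_eq : T u = ∑ j ∈ s, φ (y j) • T (f j) := by simp only [u, map_sum, map_smul]
  filter_upwards [hG.abs_le_iff_ae.1 hTu, AEEqFun.coeFn_map_sum_smul ιG φ s (T ∘ f) y]
    with b hb hTub
  rw [hTu_eq] at hb
  exact (le_abs_self _).trans (hTub ▸ hb)

/-- **Pointwise domination of the tensor extension.** Let `E`, `G` be Banach function
spaces, `T : E → G` linear, `R : E → G` a positive bounded operator dominating `T`
(`|Te| ≤ R|e|`), `Y` a Banach space, `f₁,…,f_n ∈ E`, `y₁,…,y_n ∈ Y`. If `e ∈ E`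
represents the function `a ↦ ‖∑ⱼ fⱼ(a) yⱼ‖`, then almost everywhere
`‖∑ⱼ (T fⱼ)(b) yⱼ‖ ≤ (R e)(b)`. -/
theorem tensor_extension_pointwise_domination
    {α β E G : Type*} [MeasurableSpace α] [MeasurableSpace β]
    {μ : Measure α} {ν : Measure β}
    [NormedAddCommGroup E] [Lattice E] [IsOrderedAddMonoid E] [HasSolidNorm E] [NormedSpace ℝ E] [CompleteSpace E]
    [NormedAddCommGroup G] [Lattice G] [IsOrderedAddMonoid G] [HasSolidNorm G] [NormedSpace ℝ G] [CompleteSpace G]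
    (ιE : E →ₗ[ℝ] (α →ₘ[μ] ℝ)) (ιG : G →ₗ[ℝ] (β →ₘ[ν] ℝ))
    (hE : IsBanachFunctionSpace μ E ιE) (hG : IsBanachFunctionSpace ν G ιG)
    (T : E →ₗ[ℝ] G) (R : E →L[ℝ] G)
    (hRpos : ∀ e : E, 0 ≤ e → 0 ≤ R e)
    (hdom : ∀ e : E, |T e| ≤ R |e|)
    {Y : Type*} [NormedAddCommGroup Y] [NormedSpace ℝ Y]
    {n : ℕ} (f : Fin n → E) (y : Fin n → Y) (e : E)
    (he : (fun a => ‖∑ j : Fin n, (ιE (f j)) a • y j‖) =ᵐ[μ] ⇑(ιE e)) :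
    ∀ᵐ b ∂ν, ‖∑ j : Fin n, (ιG (T (f j))) b • y j‖ ≤ (ιG (R e)) b := by
  have hspan : Continuous fun c : Fin n → ℝ => ∑ j, c j • y j := by fun_prop
  obtain ⟨D, hD_countable, hD_norm, hD_norming⟩ :=
    exists_countable_norming_set (TopologicalSpace.isSeparable_range hspan)
  have hD := (ae_ball_iff hD_countable).2 fun φ hφ =>
    ae_dual_apply_sum_smul_le hE hG hRpos hdom Finset.univ f y he (hD_norm φ hφ)
  filter_upwards [hD] with b hb
  exact hD_norming _ ⟨_, rfl⟩ _ hb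
end

section
/- A Banach lattice E is a KB-space (every increasing norm-bounded sequence in E⁺ is norm convergent) if and only if every increasing norm-bounded net in E⁺ is norm convergent. -/
open Filter Topology

section MonotoneSubsequences

variable {α J : Type*} [PseudoMetricSpace α] [Preorder J] {x : J → α}

/-- If the net `x` had no such `j₀`, iterating a choice of "bad successors" from any index would
produce a monotone sequence of indices along which `x` jumps by at least `ε` at every step. -/
theorem exists_forall_ge_dist_lt_of_forall_monotone_comp [Nonempty J]
    (hx : ∀ φ : ℕ → J, Monotone φ → CauchySeq (x ∘ φ)) {ε : ℝ} (hε : 0 < ε) :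
    ∃ j₀, ∀ j, j₀ ≤ j → dist (x j) (x j₀) < ε := by
  by_contra! hbad
  choose next le_next far_next using hbad
  set φ : ℕ → J := fun n => next^[n] (Classical.arbitrary J)
  have φ_succ : ∀ n, φ (n + 1) = next (φ n) := fun n => Function.iterate_succ_apply' ..
  have φ_mono : Monotone φ := monotone_nat_of_le_succ fun n => φ_succ n ▸ le_next _
  obtain ⟨N, hN⟩ := Metric.cauchySeq_iff'.1 (hx φ φ_mono) ε hε
  have := hN (N + 1) N.le_succ
  rw [Function.comp_apply, φ_succ] at this
  exact (far_next _).not_gt this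

theorem cauchySeq_of_forall_monotone_comp [Nonempty J] [IsDirected J (· ≤ ·)]
    (hx : ∀ φ : ℕ → J, Monotone φ → CauchySeq (x ∘ φ)) : CauchySeq x := by
  refine Metric.cauchy_iff.2 ⟨map_neBot, fun ε hε => ?_⟩
  obtain ⟨j₀, hj₀⟩ := exists_forall_ge_dist_lt_of_forall_monotone_comp hx (half_pos hε)
  refine ⟨x '' Set.Ici j₀, image_mem_map (Ici_mem_atTop j₀), ?_⟩
  rintro _ ⟨i, hi, rfl⟩ _ ⟨k, hk, rfl⟩
  calc dist (x i) (x k) ≤ dist (x i) (x j₀) + dist (x k) (x j₀) := dist_triangle_right _ _ _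
    _ < ε / 2 + ε / 2 := add_lt_add (hj₀ i hi) (hj₀ k hk)
    _ = ε := add_halves ε

end MonotoneSubsequences

theorem kbSpace_iff_nets_general {E : Type u} [NormedAddCommGroup E] [Lattice E] [CompleteSpace E] :
    (∀ x : ℕ → E, (∀ n, 0 ≤ x n) → Monotone x → (∃ C : ℝ, ∀ n, ‖x n‖ ≤ C) →
      ∃ l : E, Tendsto x atTop (𝓝 l)) ↔
    (∀ (J : Type u) [Preorder J] [Nonempty J] [IsDirected J (· ≤ ·)],
      ∀ x : J → E, (∀ j, 0 ≤ x j) → Monotone x → (∃ C : ℝ, ∀ j, ‖x j‖ ≤ C) →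
        ∃ l : E, Tendsto x atTop (𝓝 l)) := by
  constructor
  · intro hseq J _ _ _ x hpos hmono ⟨C, hC⟩
    refine cauchySeq_tendsto_of_complete (cauchySeq_of_forall_monotone_comp fun φ hφ => ?_)
    obtain ⟨l, hl⟩ := hseq (x ∘ φ) (fun n => hpos _) (hmono.comp hφ) ⟨C, fun n => hC _⟩
    exact hl.cauchySeq
  · intro hnet x hpos hmono ⟨C, hC⟩
    obtain ⟨l, hl⟩ := hnet (ULift ℕ) (x ∘ ULift.down) (fun _ => hpos _)
      (fun _ _ h => hmono h) ⟨C, fun _ => hC _⟩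
    exact ⟨l, hl.comp (tendsto_atTop_atTop_of_monotone (fun _ _ h => h) fun n => ⟨n.down, le_rfl⟩)⟩

/-- **KB-spaces via nets.** A Banach lattice `E` is a KB-space (every increasing
norm-bounded sequence of positive elements is norm convergent) if and only if every
increasing norm-bounded net of positive elements is norm convergent. -/
theorem kbSpace_iff_nets {E : Type u} [NormedAddCommGroup E] [Lattice E] [HasSolidNorm E]
    [IsOrderedAddMonoid E] [CompleteSpace E] :
    (∀ x : ℕ → E, (∀ n, 0 ≤ x n) → Monotone x → (∃ C : ℝ, ∀ n, ‖x n‖ ≤ C) →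
      ∃ l : E, Tendsto x atTop (𝓝 l)) ↔
    (∀ (J : Type u) [Preorder J] [Nonempty J] [IsDirected J (· ≤ ·)],
      ∀ x : J → E, (∀ j, 0 ≤ x j) → Monotone x → (∃ C : ℝ, ∀ j, ‖x j‖ ≤ C) →
        ∃ l : E, Tendsto x atTop (𝓝 l)) :=
  kbSpace_iff_nets_general
end

section
/- Let (A, 𝒜, μ) be a semi-finite measure space. Then the canonical map L^∞(A) → (L¹(A))*, g ↦ (f ↦ ∫ fg dμ), is an isometry. -/
/-!
Hölder's inequality gives `‖Λ_g‖ ≤ ‖g‖_∞`. Conversely, for `0 ≤ c < ‖g‖_∞` the set `{|g| > c}`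
has positive measure, so semi-finiteness provides a subset `t` of finite positive measure.
Testing `Λ_g` against `1_t · sign g`, whose `L¹` norm is at most `μ t`, gives
`c μ(t) ≤ ∫_t |g| = Λ_g (1_t · sign g) ≤ ‖Λ_g‖ μ(t)`, hence `c ≤ ‖Λ_g‖`.
-/

open MeasureTheory

/-- A measure is semi-finite if every measurable set of positive measure has a
measurable subset of finite positive measure. -/
def SemiFinite {α : Type*} [MeasurableSpace α] (μ : Measure α) : Prop :=
  ∀ s : Set α, MeasurableSet s → 0 < μ s →
    ∃ t : Set α, t ⊆ s ∧ MeasurableSet t ∧ 0 < μ t ∧ μ t < ⊤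

theorem Real.measurable_sign : Measurable Real.sign :=
  Measurable.ite measurableSet_Iio measurable_const <|
    Measurable.ite measurableSet_Ioi measurable_const measurable_const

theorem Real.sign_mul_self (x : ℝ) : Real.sign x * x = |x| := by
  rcases lt_trichotomy x 0 with hx | rfl | hx
  · rw [Real.sign_of_neg hx, abs_of_neg hx, neg_one_mul]
  · simp
  · rw [Real.sign_of_pos hx, abs_of_pos hx, one_mul]

theorem Real.abs_sign_le_one (x : ℝ) : |Real.sign x| ≤ 1 := by
  rcases Real.sign_apply_eq x with h | h | h <;> simp [h]

theorem ContinuousLinearMap.norm_lpPairing_apply_apply_le {α 𝕜 E F G : Type*}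
    {m : MeasurableSpace α} {μ : Measure α} {p q : ENNReal} [NontriviallyNormedField 𝕜]
    [NormedAddCommGroup E] [NormedAddCommGroup F] [NormedAddCommGroup G]
    [NormedSpace 𝕜 E] [NormedSpace 𝕜 F] [NormedSpace 𝕜 G] [Fact (1 ≤ p)] [Fact (1 ≤ q)]
    [p.HolderConjugate q] [NormedSpace ℝ G] [SMulCommClass ℝ 𝕜 G] [CompleteSpace G]
    (B : E →L[𝕜] F →L[𝕜] G) (f : Lp E p μ) (g : Lp F q μ) :
    ‖B.lpPairing μ p q f g‖ ≤ ‖B‖ * ‖f‖ * ‖g‖ :=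
  calc ‖B.lpPairing μ p q f g‖ = ‖L1.integral (B.holder 1 f g)‖ := by
        rw [L1.integral_eq' 𝕜]; rfl
    _ ≤ ‖B‖ * ‖f‖ * ‖g‖ := (L1.norm_integral_le _).trans (B.norm_holder_apply_apply_le f g)

section

variable {α : Type*} [MeasurableSpace α] {μ : Measure α}

theorem MeasureTheory.Lp.norm_le_of_ae_bound_top {E : Type*} [NormedAddCommGroup E] {g : Lp E ⊤ μ} {c : ℝ}
    (hc : 0 ≤ c) (hg : ∀ᵐ a ∂μ, ‖g a‖ ≤ c) : ‖g‖ ≤ c := by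
  rw [Lp.norm_def, eLpNorm_exponent_top]
  exact ENNReal.toReal_le_of_le_ofReal hc (eLpNormEssSup_le_of_ae_bound hg)

theorem SemiFinite.exists_lt_norm_of_lt_norm {E : Type*} [NormedAddCommGroup E]
    (hμ : SemiFinite μ) (g : Lp E ⊤ μ) {c : ℝ} (hc₀ : 0 ≤ c) (hc : c < ‖g‖) :
    ∃ t, MeasurableSet t ∧ 0 < μ t ∧ μ t < ⊤ ∧ ∀ a ∈ t, c < ‖g a‖ := by
  have hs : MeasurableSet {a | c < ‖g a‖} :=
    measurableSet_lt measurable_const (Lp.stronglyMeasurable g).norm.measurable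
  have hpos : 0 < μ {a | c < ‖g a‖} := by
    refine pos_iff_ne_zero.2 fun h ↦ hc.not_ge (Lp.norm_le_of_ae_bound_top hc₀ ?_)
    simpa [ae_iff] using h
  obtain ⟨t, hts, ht, htpos, httop⟩ := hμ _ hs hpos
  exact ⟨t, ht, htpos, httop, hts⟩

theorem setIntegral_abs_le_opNorm_mul_measureReal {g : α → ℝ} {t : Set α}
    (Λ : Lp ℝ 1 μ →L[ℝ] ℝ) (hΛ : ∀ f : Lp ℝ 1 μ, Λ f = ∫ a, f a * g a ∂μ)
    (ht : MeasurableSet t) (hμt : μ t ≠ ⊤) (hg : IntegrableOn g t μ) :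
    ∫ a in t, |g a| ∂μ ≤ ‖Λ‖ * μ.real t := by
  have hsign : IntegrableOn (fun a ↦ Real.sign (g a)) t μ :=
    (integrableOn_const hμt).mono'
      (Real.measurable_sign.comp_aemeasurable hg.aemeasurable).aestronglyMeasurable
      (ae_of_all _ fun a ↦ Real.abs_sign_le_one (g a))
  set F := t.indicator fun a ↦ Real.sign (g a)
  have hF : Integrable F μ := hsign.integrable_indicator ht
  have hΛF : Λ (hF.toL1 F) = ∫ a in t, |g a| ∂μ := by
    rw [hΛ, ← integral_indicator ht]
    refine integral_congr_ae ?_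
    filter_upwards [hF.coeFn_toL1] with a ha
    rw [ha]
    by_cases hat : a ∈ t <;> simp [F, hat, Real.sign_mul_self]
  have hnormF : ‖hF.toL1 F‖ ≤ μ.real t := calc
    ‖hF.toL1 F‖ = ∫ a in t, |Real.sign (g a)| ∂μ := by
      rw [L1.norm_of_fun_eq_integral_norm, ← integral_indicator ht]
      simp [F, norm_indicator_eq_indicator_norm]
    _ ≤ ∫ _ in t, (1 : ℝ) ∂μ :=
      setIntegral_mono_on hsign.abs (integrableOn_const hμt) ht
        fun a _ ↦ Real.abs_sign_le_one (g a)
    _ = μ.real t := by simp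
  calc ∫ a in t, |g a| ∂μ = Λ (hF.toL1 F) := hΛF.symm
    _ ≤ ‖Λ‖ * ‖hF.toL1 F‖ := (le_abs_self _).trans (Λ.le_opNorm _)
    _ ≤ ‖Λ‖ * μ.real t := by gcongr

end

/-- **The canonical map `L^∞ → (L¹)*` is an isometry on a semi-finite measure
space.** For every `g ∈ L^∞(μ)` the functional `f ↦ ∫ f g dμ` on `L¹(μ)` is bounded
with operator norm equal to `‖g‖_∞`. -/
theorem linfty_isometric_embedding_into_dual_l1
    {α : Type*} [MeasurableSpace α] (μ : Measure α) (hμ : SemiFinite μ)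
    (g : Lp ℝ ⊤ μ) :
    ∃ Λ : Lp ℝ 1 μ →L[ℝ] ℝ,
      (∀ f : Lp ℝ 1 μ, Λ f = ∫ a, f a * g a ∂μ) ∧ ‖Λ‖ = ‖g‖ := by
  set Λ := ((ContinuousLinearMap.mul ℝ ℝ).lpPairing μ 1 ⊤).flip g
  have hΛ : ∀ f : Lp ℝ 1 μ, Λ f = ∫ a, f a * g a ∂μ := fun f ↦
    ContinuousLinearMap.lpPairing_eq_integral _ f g
  refine ⟨Λ, hΛ, le_antisymm ?_ ?_⟩
  · refine Λ.opNorm_le_bound (norm_nonneg g) fun f ↦ ?_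
    calc ‖Λ f‖ ≤ ‖ContinuousLinearMap.mul ℝ ℝ‖ * ‖f‖ * ‖g‖ :=
          ContinuousLinearMap.norm_lpPairing_apply_apply_le _ f g
      _ ≤ 1 * ‖f‖ * ‖g‖ := by gcongr; exact ContinuousLinearMap.opNorm_mul_le ℝ ℝ
      _ = ‖g‖ * ‖f‖ := by ring
  refine le_of_forall_lt_imp_le_of_dense fun c hc ↦ ?_
  rcases lt_or_ge c 0 with hc₀ | hc₀
  · exact hc₀.le.trans (norm_nonneg Λ)
  obtain ⟨t, ht, htpos, httop, hgt⟩ := hμ.exists_lt_norm_of_lt_norm g hc₀ hc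
  have hg : IntegrableOn g t μ := integrableOn_Lp_of_measure_ne_top g le_top httop.ne
  refine le_of_mul_le_mul_right ?_ (ENNReal.toReal_pos htpos.ne' httop.ne)
  calc c * μ.real t ≤ ∫ a in t, |g a| ∂μ := by
        rw [mul_comm, ← smul_eq_mul]
        exact setIntegral_ge_of_const_le ht httop.ne (fun a ha ↦ (hgt a ha).le) hg.abs
    _ ≤ ‖Λ‖ * μ.real t := setIntegral_abs_le_opNorm_mul_measureReal Λ hΛ ht httop.ne hg
end

section
/- Viewing L¹(A) as a closed Riesz subspace of (L^∞(A))* via the pairing ⟨f, g⟩ = ∫ fg dμ on a semi-finite measure space (A, 𝒜, μ), L¹(A) is an order ideal in the Banach lattice (L^∞(A))*: if Λ ∈ (L^∞(A))* and f ∈ L¹(A) satisfy 0 ≤ Λ ≤ f (as functionals), then Λ is represented by an L¹ function. -/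
/-!
Positivity of `Λ` and `Λ ≤ f` give the domination `|Λ u| ≤ ∫ f |u|`, so by dominated
convergence `Λ` is continuous along uniformly bounded, a.e. convergent sequences in `L^∞`.
Hence `s ↦ Λ 1_s` is countably additive, a measure bounded by `|f| μ`, and Radon–Nikodym
writes it as `s ↦ ∫_s h` with `h ∈ L¹`. The functionals `Λ` and `u ↦ ∫ h u` then agree on
simple functions, and by the same continuity on all of `L^∞`.
-/

open MeasureTheory

open Filter Topology
open scoped ENNReal

lemma hasSum_indicator_one_of_pairwise_disjoint {α : Type*} {E : ℕ → Set α}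
    (hd : Pairwise (Function.onFun Disjoint E)) (x : α) :
    HasSum (fun i => (E i).indicator (1 : α → ℝ) x) ((⋃ i, E i).indicator 1 x) := by
  by_cases hx : x ∈ ⋃ i, E i
  · obtain ⟨j, hj⟩ := Set.mem_iUnion.mp hx
    rw [Set.indicator_of_mem hx, ← Set.indicator_of_mem hj (1 : α → ℝ)]
    refine hasSum_single j fun i hij => Set.indicator_of_notMem ?_ _
    exact Set.disjoint_left.mp (hd hij.symm) hj
  · rw [Set.indicator_of_notMem hx]
    refine hasSum_zero.congr_fun fun i => Set.indicator_of_notMem ?_ _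
    exact fun hi => hx (Set.mem_iUnion.mpr ⟨i, hi⟩)

section

variable {α : Type*} [MeasurableSpace α] {μ : Measure α}

lemma ae_norm_le_norm (u : Lp ℝ ∞ μ) : ∀ᵐ x ∂μ, ‖u x‖ ≤ ‖u‖ := by
  have hfin : eLpNormEssSup u μ ≠ ∞ := by
    simpa [eLpNorm_exponent_top] using (Lp.eLpNorm_lt_top u).ne
  filter_upwards [enorm_ae_le_eLpNormEssSup u μ] with x hx
  simpa [Lp.norm_def, eLpNorm_exponent_top] using ENNReal.toReal_mono hfin hx

variable (μ) in
/-- Unlike `indicatorConstLp`, this needs no finiteness of `μ s`. -/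
noncomputable def indicatorLinfty {s : Set α} (hs : MeasurableSet s) : Lp ℝ ∞ μ :=
  ((memLp_top_const (1 : ℝ)).indicator hs).toLp (s.indicator 1)

lemma coeFn_indicatorLinfty {s : Set α} (hs : MeasurableSet s) :
    indicatorLinfty μ hs =ᵐ[μ] s.indicator 1 :=
  MemLp.coeFn_toLp _

lemma indicatorLinfty_nonneg {s : Set α} (hs : MeasurableSet s) : 0 ≤ indicatorLinfty μ hs := by
  rw [← Lp.coeFn_nonneg]
  filter_upwards [coeFn_indicatorLinfty (μ := μ) hs] with x hx
  rw [hx]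
  exact Set.indicator_nonneg (fun _ _ => zero_le_one) x

lemma indicatorLinfty_empty : indicatorLinfty μ MeasurableSet.empty = 0 := by
  simp only [indicatorLinfty, Set.indicator_empty]
  exact MemLp.toLp_zero _

theorem exists_integrable_setIntegral_eq_of_le_withDensity {ν : Measure α} {w : α → ℝ≥0∞}
    (hw : AEMeasurable w μ) (hw_fin : ∫⁻ a, w a ∂μ ≠ ∞) (hν : ν ≤ μ.withDensity w) :
    ∃ h : α → ℝ, Integrable h μ ∧ ∀ s, MeasurableSet s → ∫ a in s, h a ∂μ = (ν s).toReal := by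
  -- `μ` need not be σ-finite, so the derivative is taken against `μ.withDensity w`.
  have : IsFiniteMeasure (μ.withDensity w) := isFiniteMeasure_withDensity hw_fin
  have : IsFiniteMeasure ν := isFiniteMeasure_of_le _ hν
  set d := ν.rnDeriv (μ.withDensity w)
  have hd : AEMeasurable d μ := (Measure.measurable_rnDeriv _ _).aemeasurable
  have hwd : μ.withDensity (w * d) = ν := by
    rw [withDensity_mul₀ hw hd, Measure.withDensity_rnDeriv_eq _ _ hν.absolutelyContinuous]
  have hfin : ∫⁻ a, (w * d) a ∂μ ≠ ∞ := by
    rw [← setLIntegral_univ, ← withDensity_apply _ MeasurableSet.univ, hwd]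
    exact measure_ne_top ν _
  refine ⟨fun a => ((w * d) a).toReal,
    integrable_toReal_of_lintegral_ne_top (hw.mul hd) hfin, fun s hs => ?_⟩
  rw [integral_toReal (hw.mul hd).restrict (ae_restrict_of_ae (ae_lt_top' (hw.mul hd) hfin)),
    ← withDensity_apply _ hs, hwd]

section Dominated

variable {Λ : Lp ℝ ∞ μ →L[ℝ] ℝ} {k h : α → ℝ}

lemma abs_apply_le_integral_mul_abs (hΛpos : ∀ u : Lp ℝ ∞ μ, 0 ≤ u → 0 ≤ Λ u)
    (hΛle : ∀ u : Lp ℝ ∞ μ, 0 ≤ u → Λ u ≤ ∫ a, k a * u a ∂μ) (u : Lp ℝ ∞ μ) :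
    |Λ u| ≤ ∫ a, k a * |u a| ∂μ := by
  have h_sub : 0 ≤ Λ (|u| - u) := hΛpos _ (sub_nonneg.mpr (le_abs_self u))
  have h_add : 0 ≤ Λ (|u| + u) := hΛpos _ (neg_le_iff_add_nonneg.mp (neg_le_abs u))
  rw [map_sub] at h_sub
  rw [map_add] at h_add
  calc |Λ u| ≤ Λ |u| := abs_le.mpr ⟨by linarith, by linarith⟩
    _ ≤ ∫ a, k a * |u| a ∂μ := hΛle _ (abs_nonneg u)
    _ = ∫ a, k a * |u a| ∂μ := integral_congr_ae <| by
        filter_upwards [Lp.coeFn_abs u] with a ha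
        rw [ha]

lemma apply_indicatorLinfty_le_setIntegral
    (hΛ : ∀ u : Lp ℝ ∞ μ, |Λ u| ≤ ∫ a, k a * |u a| ∂μ) {s : Set α} (hs : MeasurableSet s) :
    Λ (indicatorLinfty μ hs) ≤ ∫ a in s, k a ∂μ :=
  calc Λ (indicatorLinfty μ hs) ≤ |Λ (indicatorLinfty μ hs)| := le_abs_self _
    _ ≤ ∫ a, k a * |indicatorLinfty μ hs a| ∂μ := hΛ _
    _ = ∫ a in s, k a ∂μ := by
      rw [← integral_indicator hs]
      refine integral_congr_ae ?_
      filter_upwards [coeFn_indicatorLinfty (μ := μ) hs] with a ha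
      by_cases has : a ∈ s <;> simp [ha, has]

theorem apply_toLp_simpleFunc (hh : Integrable h μ)
    (hind : ∀ s (hs : MeasurableSet s), Λ (indicatorLinfty μ hs) = ∫ a in s, h a ∂μ)
    (φ : SimpleFunc α ℝ) : Λ ((φ.memLp_top μ).toLp φ) = ∫ a, h a * φ a ∂μ := by
  induction φ using SimpleFunc.induction with
  | @const c s hs =>
    have hφ : (SimpleFunc.memLp_top (.piecewise s hs (.const α c) (.const α 0)) μ).toLp _ =
        c • indicatorLinfty μ hs := by
      rw [indicatorLinfty, ← MemLp.toLp_const_smul]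
      refine MemLp.toLp_congr _ _ (Eventually.of_forall fun a => ?_)
      by_cases ha : a ∈ s <;> simp [ha]
    rw [hφ, map_smul, hind s hs, smul_eq_mul, ← integral_const_mul, ← integral_indicator hs]
    refine integral_congr_ae (Eventually.of_forall fun a => ?_)
    by_cases ha : a ∈ s <;> simp [ha, mul_comm]
  | @add φ ψ _ hφ hψ =>
    have hint : ∀ χ : SimpleFunc α ℝ, Integrable (fun a => h a * χ a) μ := fun χ =>
      hh.mul_bdd χ.aestronglyMeasurable
        (Eventually.of_forall χ.exists_forall_norm_le.choose_spec)
    calc Λ ((SimpleFunc.memLp_top (φ + ψ) μ).toLp _)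
        = Λ ((φ.memLp_top μ).toLp φ + (ψ.memLp_top μ).toLp ψ) :=
          congrArg Λ (MemLp.toLp_add _ _)
      _ = ∫ a, h a * (φ + ψ) a ∂μ := by
          rw [map_add, hφ, hψ, ← integral_add (hint φ) (hint ψ)]
          simp only [SimpleFunc.coe_add, Pi.add_apply, mul_add]

variable (hk : Integrable k μ) (hΛ : ∀ u : Lp ℝ ∞ μ, |Λ u| ≤ ∫ a, k a * |u a| ∂μ)
include hk hΛ

theorem tendsto_apply_of_ae_tendsto {u : ℕ → Lp ℝ ∞ μ} {v : Lp ℝ ∞ μ} {C : ℝ}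
    (hbound : ∀ n, ∀ᵐ x ∂μ, ‖u n x‖ ≤ C)
    (hlim : ∀ᵐ x ∂μ, Tendsto (fun n => u n x) atTop (𝓝 (v x))) :
    Tendsto (fun n => Λ (u n)) atTop (𝓝 (Λ v)) := by
  have hv : ∀ᵐ x ∂μ, ‖v x‖ ≤ C := by
    filter_upwards [ae_all_iff.mpr hbound, hlim] with x hx hxlim
    exact le_of_tendsto' hxlim.norm hx
  have hdiff : Tendsto (fun n => ∫ a, k a * |u n a - v a| ∂μ) atTop (𝓝 (∫ a, k a * 0 ∂μ)) := by
    refine tendsto_integral_of_dominated_convergence (fun a => ‖k a‖ * (C + C))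
      (fun n => hk.aestronglyMeasurable.mul ?_) (hk.norm.mul_const _) (fun n => ?_) ?_
    · exact ((Lp.aestronglyMeasurable (u n)).sub (Lp.aestronglyMeasurable v)).norm
    · filter_upwards [hbound n, hv] with a hun hva
      rw [norm_mul, Real.norm_eq_abs |_|, abs_abs]
      exact mul_le_mul_of_nonneg_left ((norm_sub_le _ _).trans (add_le_add hun hva))
        (norm_nonneg _)
    · filter_upwards [hlim] with a ha
      simpa using ((ha.sub_const (v a)).abs.const_mul (k a))
  rw [tendsto_iff_norm_sub_tendsto_zero]
  refine squeeze_zero (fun n => norm_nonneg _) (fun n => ?_) (by simpa using hdiff)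
  calc ‖Λ (u n) - Λ v‖ = |Λ (u n - v)| := by rw [map_sub, Real.norm_eq_abs]
    _ ≤ ∫ a, k a * |(u n - v) a| ∂μ := hΛ _
    _ = ∫ a, k a * |u n a - v a| ∂μ := integral_congr_ae <| by
        filter_upwards [Lp.coeFn_sub (u n) v] with a ha
        rw [ha, Pi.sub_apply]

theorem hasSum_apply_indicatorLinfty (hΛpos : ∀ u : Lp ℝ ∞ μ, 0 ≤ u → 0 ≤ Λ u)
    {E : ℕ → Set α} (hE : ∀ i, MeasurableSet (E i)) (hd : Pairwise (Function.onFun Disjoint E)) :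
    HasSum (fun i => Λ (indicatorLinfty μ (hE i)))
      (Λ (indicatorLinfty μ (MeasurableSet.iUnion hE))) := by
  refine (hasSum_iff_tendsto_nat_of_nonneg (fun i => hΛpos _ (indicatorLinfty_nonneg _)) _).mpr ?_
  simp_rw [← map_sum]
  have hcoe : ∀ᵐ x ∂μ, ∀ i, indicatorLinfty μ (hE i) x = (E i).indicator 1 x :=
    ae_all_iff.mpr fun i => coeFn_indicatorLinfty (hE i)
  have hsum : ∀ N, ∀ᵐ x ∂μ, (∑ i ∈ Finset.range N, indicatorLinfty μ (hE i)) x =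
      ∑ i ∈ Finset.range N, (E i).indicator (1 : α → ℝ) x := fun N => by
    filter_upwards [Lp.coeFn_fun_finsetSum (Finset.range N) fun i => indicatorLinfty μ (hE i),
      hcoe] with x hx hxi
    simp only [hx, hxi]
  refine tendsto_apply_of_ae_tendsto hk hΛ (C := 1) (fun N => ?_) ?_
  · filter_upwards [hsum N] with x hx
    have hx_sum := hasSum_indicator_one_of_pairwise_disjoint hd x
    have hnonneg : ∀ i, 0 ≤ (E i).indicator (1 : α → ℝ) x :=
      fun i => Set.indicator_nonneg (fun _ _ => zero_le_one) x
    rw [hx, Real.norm_of_nonneg (Finset.sum_nonneg fun i _ => hnonneg i)]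
    exact (sum_le_hasSum _ (fun i _ => hnonneg i) hx_sum).trans
      (Set.indicator_le_self' (fun _ _ => zero_le_one) x)
  · filter_upwards [ae_all_iff.mpr hsum, coeFn_indicatorLinfty (μ := μ) (MeasurableSet.iUnion hE)]
      with x hx hU
    simp only [hx, hU]
    exact (hasSum_indicator_one_of_pairwise_disjoint hd x).tendsto_sum_nat

theorem exists_measure_eq_ofReal_apply_indicatorLinfty
    (hΛpos : ∀ u : Lp ℝ ∞ μ, 0 ≤ u → 0 ≤ Λ u) :
    ∃ ν : Measure α, ∀ s (hs : MeasurableSet s), ν s = ENNReal.ofReal (Λ (indicatorLinfty μ hs)) :=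
  ⟨Measure.ofMeasurable (fun s hs => ENNReal.ofReal (Λ (indicatorLinfty μ hs)))
    (by simp [indicatorLinfty_empty])
    (fun E hE hd => by
      have hsum := hasSum_apply_indicatorLinfty hk hΛ hΛpos hE hd
      rw [← hsum.tsum_eq]
      exact ENNReal.ofReal_tsum_of_nonneg (fun i => hΛpos _ (indicatorLinfty_nonneg _))
        hsum.summable),
   fun s hs => Measure.ofMeasurable_apply s hs⟩

theorem exists_integrable_apply_indicatorLinfty_eq (hΛpos : ∀ u : Lp ℝ ∞ μ, 0 ≤ u → 0 ≤ Λ u) :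
    ∃ h : α → ℝ, Integrable h μ ∧
      ∀ s (hs : MeasurableSet s), Λ (indicatorLinfty μ hs) = ∫ a in s, h a ∂μ := by
  obtain ⟨ν, hν⟩ := exists_measure_eq_ofReal_apply_indicatorLinfty hk hΛ hΛpos
  have hle : ν ≤ μ.withDensity (fun a => ‖k a‖ₑ) := Measure.le_iff.mpr fun s hs => by
    rw [hν s hs, withDensity_apply _ hs]
    calc ENNReal.ofReal (Λ (indicatorLinfty μ hs)) ≤ ENNReal.ofReal (∫ a in s, k a ∂μ) :=
          ENNReal.ofReal_le_ofReal (apply_indicatorLinfty_le_setIntegral hΛ hs)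
      _ ≤ ‖∫ a in s, k a ∂μ‖ₑ := Real.ofReal_le_enorm _
      _ ≤ ∫⁻ a in s, ‖k a‖ₑ ∂μ := enorm_integral_le_lintegral_enorm _
  obtain ⟨h, hh, hνh⟩ := exists_integrable_setIntegral_eq_of_le_withDensity
    hk.aestronglyMeasurable.enorm hk.hasFiniteIntegral.ne hle
  refine ⟨h, hh, fun s hs => ?_⟩
  rw [hνh s hs, hν s hs, ENNReal.toReal_ofReal (hΛpos _ (indicatorLinfty_nonneg hs))]

theorem apply_eq_integral_mul (hh : Integrable h μ)
    (hind : ∀ s (hs : MeasurableSet s), Λ (indicatorLinfty μ hs) = ∫ a in s, h a ∂μ)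
    (u : Lp ℝ ∞ μ) : Λ u = ∫ a, h a * u a ∂μ := by
  set φ := (Lp.stronglyMeasurable u).approxBounded ‖u‖
  have hφ_le : ∀ n x, ‖φ n x‖ ≤ ‖u‖ :=
    (Lp.stronglyMeasurable u).norm_approxBounded_le (norm_nonneg u)
  have hφ_lim := (Lp.stronglyMeasurable u).tendsto_approxBounded_ae (ae_norm_le_norm u)
  set v := fun n => ((φ n).memLp_top μ).toLp (φ n)
  have hv : ∀ n, v n =ᵐ[μ] φ n := fun n => MemLp.coeFn_toLp _
  have hΛv : Tendsto (fun n => Λ (v n)) atTop (𝓝 (Λ u)) := by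
    refine tendsto_apply_of_ae_tendsto hk hΛ (C := ‖u‖) (fun n => ?_) ?_
    · filter_upwards [hv n] with x hx
      exact hx ▸ hφ_le n x
    · filter_upwards [ae_all_iff.mpr hv, hφ_lim] with x hx hlim
      simpa only [hx] using hlim
  have hint : Tendsto (fun n => ∫ a, h a * φ n a ∂μ) atTop (𝓝 (∫ a, h a * u a ∂μ)) := by
    refine tendsto_integral_of_dominated_convergence (fun a => ‖h a‖ * ‖u‖)
      (fun n => hh.aestronglyMeasurable.mul (φ n).aestronglyMeasurable) (hh.norm.mul_const _)
      (fun n => Eventually.of_forall fun a => ?_) ?_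
    · rw [norm_mul]
      exact mul_le_mul_of_nonneg_left (hφ_le n a) (norm_nonneg _)
    · filter_upwards [hφ_lim] with a ha using ha.const_mul (h a)
  refine tendsto_nhds_unique hΛv ?_
  simpa only [v, apply_toLp_simpleFunc hh hind] using hint

end Dominated

end

theorem l1_ideal_in_dual_linfty_general
    {α : Type*} [MeasurableSpace α] (μ : Measure α)
    (Λ : Lp ℝ ⊤ μ →L[ℝ] ℝ) (f : Lp ℝ 1 μ)
    (hΛpos : ∀ g : Lp ℝ ⊤ μ, 0 ≤ g → 0 ≤ Λ g)
    (hΛle : ∀ g : Lp ℝ ⊤ μ, 0 ≤ g → Λ g ≤ ∫ a, f a * g a ∂μ) :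
    ∃ h : Lp ℝ 1 μ, ∀ g : Lp ℝ ⊤ μ, Λ g = ∫ a, h a * g a ∂μ := by
  have hf := L1.integrable_coeFn f
  have hΛ := abs_apply_le_integral_mul_abs hΛpos hΛle
  obtain ⟨h, hh, hind⟩ := exists_integrable_apply_indicatorLinfty_eq hf hΛ hΛpos
  refine ⟨hh.toL1 h, fun g => ?_⟩
  rw [apply_eq_integral_mul hf hΛ hh hind g]
  refine integral_congr_ae ?_
  filter_upwards [hh.coeFn_toL1] with a ha
  rw [ha]

/-- **`L¹` is an order ideal in `(L^∞)*`.** On a semi-finite measure space, if a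
functional `Λ ∈ (L^∞(μ))*` satisfies `0 ≤ Λ ≤ f` for some `f ∈ L¹(μ)` (in the order
of `(L^∞)*`, where `f` acts by integration), then `Λ` is itself represented by an
`L¹` function. -/
theorem l1_ideal_in_dual_linfty
    {α : Type*} [MeasurableSpace α] (μ : Measure α) (hμ : SemiFinite μ)
    (Λ : Lp ℝ ⊤ μ →L[ℝ] ℝ) (f : Lp ℝ 1 μ)
    (hΛpos : ∀ g : Lp ℝ ⊤ μ, 0 ≤ g → 0 ≤ Λ g)
    (hΛle : ∀ g : Lp ℝ ⊤ μ, 0 ≤ g → Λ g ≤ ∫ a, f a * g a ∂μ) :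
    ∃ h : Lp ℝ 1 μ, ∀ g : Lp ℝ ⊤ μ, Λ g = ∫ a, h a * g a ∂μ :=
  l1_ideal_in_dual_linfty_general μ Λ f hΛpos hΛle
end

section
/- Let (A, 𝒜, μ) be a measure space, 𝒢 ⊂ 𝒜 a sub-σ-algebra with the restricted measure σ-finite, and Y a Banach space. Then there exists a contractive projection E^∞_{𝒢,Y} on L^∞(A; Y) with range L^∞(A, 𝒢; Y) such that ∫_F f dμ = ∫_F E^∞_{𝒢,Y} f dμ for all f ∈ L^∞(A; Y) and all F ∈ 𝒢 with μ(F) < ∞, and such an operator is unique. -/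
/-!
On each piece `Dₙ` of a countable `𝒢`-measurable partition of `A` into sets of finite measure
(which exists because `μ` is σ-finite on `𝒢`), a bounded `f` is integrable and has the usual
conditional expectation `𝔼[𝟙_{Dₙ} f | 𝒢]`; gluing these gives a `𝒢`-measurable function which,
by conditional Jensen, is bounded by `‖f‖_∞`, and which has the same integrals as `f` over
`𝒢`-sets of finite measure. A `𝒢`-measurable `L^∞` class is determined by these integrals, so
the glued map is linear, fixes `L^∞(A, 𝒢; Y)`, and is the only operator with the required
properties.
-/

open MeasureTheory Set Filter
open scoped ENNReal

namespace MeasureTheory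

variable {α : Type*}

theorem StronglyMeasurable.apply_measurable_index {β : Type*} {m : MeasurableSpace α}
    [TopologicalSpace β] [TopologicalSpace.PseudoMetrizableSpace β] [AddCommMonoid β]
    [ContinuousAdd β]
    {g : ℕ → α → β} (hg : ∀ n, StronglyMeasurable (g n)) {ι : α → ℕ} (hι : Measurable ι) :
    StronglyMeasurable fun a => g (ι a) a := by
  refine stronglyMeasurable_of_tendsto atTop
    (f := fun N a => ∑ n ∈ Finset.range N, (ι ⁻¹' {n}).indicator (g n) a)
    (fun N => Finset.stronglyMeasurable_fun_sum _ fun n _ =>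
      (hg n).indicator (hι (measurableSet_singleton n)))
    (tendsto_pi_nhds.2 fun a => tendsto_atTop_of_eventually_const (i₀ := ι a + 1) fun N hN => ?_)
  rw [Finset.sum_eq_single_of_mem (ι a) (Finset.mem_range.2 hN)]
  · exact indicator_of_mem (mem_preimage.2 rfl) (g (ι a))
  · exact fun n _ hn =>
      indicator_of_notMem (s := ι ⁻¹' {n}) (fun h => hn (mem_singleton_iff.1 h).symm) _

variable {E : Type*} [NormedAddCommGroup E] {m m0 : MeasurableSpace α} {μ : Measure α}

theorem Lp.ae_norm_le_norm_top (f : Lp E ∞ μ) : ∀ᵐ a ∂μ, ‖f a‖ ≤ ‖f‖ := by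
  simpa only [Lp.norm_def, toReal_eLpNorm (Lp.memLp f).1] using
    ae_le_lpNorm_exponent_top (Lp.memLp f)

theorem Lp.norm_toLp_top_le {f : α → E} (hf : MemLp f ∞ μ) {C : ℝ} (hC : 0 ≤ C)
    (hfC : ∀ᵐ a ∂μ, ‖f a‖ ≤ C) : ‖hf.toLp f‖ ≤ C := by
  rw [Lp.norm_toLp, eLpNorm_exponent_top]
  exact ENNReal.toReal_le_of_le_ofReal hC (eLpNormEssSup_le_of_ae_bound hfC)

variable [NormedSpace ℝ E]

theorem Lp.setIntegral_add {p : ℝ≥0∞} (hp : 1 ≤ p) (u v : Lp E p μ) {s : Set α} (hs : μ s ≠ ∞) :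
    ∫ a in s, (u + v) a ∂μ = ∫ a in s, u a ∂μ + ∫ a in s, v a ∂μ := by
  rw [integral_congr_ae (ae_restrict_of_ae (Lp.coeFn_add u v))]
  exact integral_add (integrableOn_Lp_of_measure_ne_top u hp hs)
    (integrableOn_Lp_of_measure_ne_top v hp hs)

theorem Lp.setIntegral_smul {p : ℝ≥0∞} (c : ℝ) (u : Lp E p μ) (s : Set α) :
    ∫ a in s, (c • u) a ∂μ = c • ∫ a in s, u a ∂μ := by
  rw [integral_congr_ae (ae_restrict_of_ae (Lp.coeFn_smul c u))]
  exact integral_smul c _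

theorem Lp.eq_of_forall_setIntegral_eq [CompleteSpace E] (hm : m ≤ m0) [SigmaFinite (μ.trim hm)]
    {p : ℝ≥0∞} (hp : 1 ≤ p) {u v : Lp E p μ} (hu : AEStronglyMeasurable[m] u μ)
    (hv : AEStronglyMeasurable[m] v μ)
    (huv : ∀ s, MeasurableSet[m] s → μ s < ∞ → ∫ a in s, u a ∂μ = ∫ a in s, v a ∂μ) : u = v :=
  Lp.ext <| ae_eq_of_forall_setIntegral_eq_of_sigmaFinite' hm
    (fun _ _ hs => integrableOn_Lp_of_measure_ne_top u hp hs.ne)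
    (fun _ _ hs => integrableOn_Lp_of_measure_ne_top v hp hs.ne) huv hu hv

section condExpGlue

variable (hm : m ≤ m0) [SigmaFinite (μ.trim hm)]

theorem measure_disjointed_spanningSets_trim_lt_top (n : ℕ) :
    μ (disjointed (spanningSets (μ.trim hm)) n) < ∞ :=
  (le_trim hm).trans_lt <|
    (measure_mono (disjointed_subset _ n)).trans_lt (measure_spanningSets_lt_top _ n)

variable (μ) in
noncomputable def condExpGlue (f : α → E) : α → E := fun a =>
  μ[(disjointed (spanningSets (μ.trim hm)) (spanningSetsIndex (μ.trim hm) a)).indicator f | m] a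

variable {hm} in
theorem condExpGlue_eqOn (f : α → E) (n : ℕ) :
    EqOn (condExpGlue μ hm f) (μ[(disjointed (spanningSets (μ.trim hm)) n).indicator f | m])
      (disjointed (spanningSets (μ.trim hm)) n) := fun a ha => by
  rw [condExpGlue, (spanningSetsIndex_eq_iff _).2 ha]

theorem stronglyMeasurable_condExpGlue (f : α → E) :
    StronglyMeasurable[m] (condExpGlue μ hm f) :=
  StronglyMeasurable.apply_measurable_index
    (g := fun n => μ[(disjointed (spanningSets (μ.trim hm)) n).indicator f | m])
    (fun _ => stronglyMeasurable_condExp)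
    (measurableSet_spanningSetsIndex _)

theorem ae_norm_condExpGlue_le [CompleteSpace E] {f : α → E} {C : ℝ} (hfC : ∀ᵐ a ∂μ, ‖f a‖ ≤ C) :
    ∀ᵐ a ∂μ, ‖condExpGlue μ hm f a‖ ≤ C := by
  have h : ∀ᵐ a ∂μ, ∀ n,
      ‖(μ[(disjointed (spanningSets (μ.trim hm)) n).indicator f | m]) a‖ ≤ C :=
    ae_all_iff.2 fun n => ae_bdd_norm_condExp_of_ae_bdd_norm <|
      hfC.mono fun a ha => norm_indicator_le_norm_self f a |>.trans ha
  exact h.mono fun a ha => ha _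

theorem setIntegral_condExpGlue [CompleteSpace E] {f : α → E}
    (hf : ∀ s, MeasurableSet[m] s → μ s < ∞ → IntegrableOn f s μ) {s : Set α}
    (hs : MeasurableSet[m] s) (hμs : μ s < ∞) (hfs : IntegrableOn (condExpGlue μ hm f) s μ) :
    ∫ a in s, condExpGlue μ hm f a ∂μ = ∫ a in s, f a ∂μ := by
  set D := disjointed (spanningSets (μ.trim hm))
  have hD : ∀ n, MeasurableSet[m] (D n) := MeasurableSet.disjointed (measurableSet_spanningSets _)
  have hsD : ∀ n, MeasurableSet (s ∩ D n) := fun n => hm _ (hs.inter (hD n))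
  have hcover : ⋃ n, s ∩ D n = s := by
    rw [← inter_iUnion, iUnion_disjointed, iUnion_spanningSets, inter_univ]
  have hsum : ∀ {g : α → E}, IntegrableOn g s μ →
      ∫ a in s, g a ∂μ = ∑' n, ∫ a in s ∩ D n, g a ∂μ := fun hg => by
    rw [← integral_iUnion hsD ((disjoint_disjointed _).mono fun _ _ h =>
      h.mono inter_subset_right inter_subset_right) (by rwa [hcover]), hcover]
  rw [hsum hfs, hsum (hf s hs hμs)]
  refine tsum_congr fun n => ?_
  have hfD : Integrable ((D n).indicator f) μ := (integrable_indicator_iff (hm _ (hD n))).2 <|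
    hf _ (hD n) (measure_disjointed_spanningSets_trim_lt_top hm n)
  calc ∫ a in s ∩ D n, condExpGlue μ hm f a ∂μ
      = ∫ a in s ∩ D n, (μ[(D n).indicator f | m]) a ∂μ :=
        setIntegral_congr_fun (hsD n) fun a ha => condExpGlue_eqOn f n ha.2
    _ = ∫ a in s ∩ D n, (D n).indicator f a ∂μ := setIntegral_condExp hm hfD (hs.inter (hD n))
    _ = ∫ a in s ∩ D n, f a ∂μ := setIntegral_congr_fun (hsD n) fun a ha => indicator_of_mem ha.2 f

end condExpGlue

section condExpLinfty

variable [CompleteSpace E] (hm : m ≤ m0) [SigmaFinite (μ.trim hm)]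

theorem memLp_top_condExpGlue (f : Lp E ∞ μ) : MemLp (condExpGlue μ hm f) ∞ μ :=
  memLp_top_of_bound ((stronglyMeasurable_condExpGlue hm f).mono hm).aestronglyMeasurable ‖f‖
    (ae_norm_condExpGlue_le hm (Lp.ae_norm_le_norm_top f))

noncomputable def condExpLinftyFun (f : Lp E ∞ μ) : Lp E ∞ μ :=
  (memLp_top_condExpGlue hm f).toLp _

theorem aestronglyMeasurable_condExpLinftyFun (f : Lp E ∞ μ) :
    AEStronglyMeasurable[m] (condExpLinftyFun hm f) μ :=
  ⟨_, stronglyMeasurable_condExpGlue hm f, MemLp.coeFn_toLp _⟩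

theorem norm_condExpLinftyFun_le (f : Lp E ∞ μ) : ‖condExpLinftyFun hm f‖ ≤ ‖f‖ :=
  Lp.norm_toLp_top_le _ (norm_nonneg f) (ae_norm_condExpGlue_le hm (Lp.ae_norm_le_norm_top f))

theorem setIntegral_condExpLinftyFun (f : Lp E ∞ μ) {s : Set α} (hs : MeasurableSet[m] s)
    (hμs : μ s < ∞) : ∫ a in s, condExpLinftyFun hm f a ∂μ = ∫ a in s, f a ∂μ := by
  have hcoe : condExpLinftyFun hm f =ᵐ[μ] condExpGlue μ hm f := MemLp.coeFn_toLp _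
  rw [integral_congr_ae (ae_restrict_of_ae hcoe)]
  exact setIntegral_condExpGlue hm
    (fun _ _ ht => integrableOn_Lp_of_measure_ne_top f le_top ht.ne) hs hμs
    ((integrableOn_Lp_of_measure_ne_top _ le_top hμs.ne).congr_fun_ae (ae_restrict_of_ae hcoe))

theorem eq_condExpLinftyFun_of_forall_setIntegral_eq {f u : Lp E ∞ μ}
    (hu : AEStronglyMeasurable[m] u μ)
    (hfu : ∀ s, MeasurableSet[m] s → μ s < ∞ → ∫ a in s, u a ∂μ = ∫ a in s, f a ∂μ) :
    u = condExpLinftyFun hm f :=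
  Lp.eq_of_forall_setIntegral_eq hm le_top hu (aestronglyMeasurable_condExpLinftyFun hm f)
    fun s hs hμs => (hfu s hs hμs).trans (setIntegral_condExpLinftyFun hm f hs hμs).symm

variable (E μ) in
noncomputable def condExpLinfty : Lp E ∞ μ →L[ℝ] Lp E ∞ μ :=
  LinearMap.mkContinuous
    { toFun := condExpLinftyFun hm
      map_add' := fun f g => by
        refine (eq_condExpLinftyFun_of_forall_setIntegral_eq hm ?_ fun s hs hμs => ?_).symm
        · exact ((aestronglyMeasurable_condExpLinftyFun hm f).add
            (aestronglyMeasurable_condExpLinftyFun hm g)).congr (Lp.coeFn_add _ _).symm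
        · rw [Lp.setIntegral_add le_top _ _ hμs.ne, Lp.setIntegral_add le_top _ _ hμs.ne,
            setIntegral_condExpLinftyFun hm f hs hμs, setIntegral_condExpLinftyFun hm g hs hμs]
      map_smul' := fun c f => by
        refine (eq_condExpLinftyFun_of_forall_setIntegral_eq hm ?_ fun s hs hμs => ?_).symm
        · exact ((aestronglyMeasurable_condExpLinftyFun hm f).const_smul c).congr
            (Lp.coeFn_smul _ _).symm
        · rw [RingHom.id_apply, Lp.setIntegral_smul, Lp.setIntegral_smul,
            setIntegral_condExpLinftyFun hm f hs hμs] }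
    1 fun f => (norm_condExpLinftyFun_le hm f).trans_eq (one_mul _).symm

theorem norm_condExpLinfty_le : ‖condExpLinfty E μ hm‖ ≤ 1 :=
  LinearMap.mkContinuous_norm_le _ zero_le_one _

end condExpLinfty

end MeasureTheory

/-- **Conditional expectation on `L^∞(A;Y)`.** Let `m ≤ m0` be a sub-σ-algebra with
σ-finite trace and `Y` a Banach space. There is a unique contractive projection
`P` on `L^∞(μ; Y)` whose range is `L^∞(A, 𝒢; Y)` (the classes with a strongly
`𝒢`-measurable representative) and which satisfies `∫_F f = ∫_F P f` for every
`𝒢`-measurable set `F` of finite measure. -/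
theorem exists_unique_condexp_linfty_vector_valued
    {α : Type*} {m m0 : MeasurableSpace α} (μ : Measure α) (hm : m ≤ m0)
    [SigmaFinite (μ.trim hm)]
    (Y : Type*) [NormedAddCommGroup Y] [NormedSpace ℝ Y] [CompleteSpace Y] :
    ∃! P : Lp Y ⊤ μ →L[ℝ] Lp Y ⊤ μ,
      -- contractive
      ‖P‖ ≤ 1 ∧
      -- projection
      (∀ f : Lp Y ⊤ μ, P (P f) = P f) ∧
      -- range contained in `L^∞(A, 𝒢; Y)`
      (∀ f : Lp Y ⊤ μ, ∃ g : α → Y, StronglyMeasurable[m] g ∧ ⇑(P f) =ᵐ[μ] g) ∧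
      -- `P` fixes `L^∞(A, 𝒢; Y)`, so its range is all of `L^∞(A, 𝒢; Y)`
      (∀ f : Lp Y ⊤ μ, (∃ g : α → Y, StronglyMeasurable[m] g ∧ ⇑f =ᵐ[μ] g) →
        P f = f) ∧
      -- averaging property on `𝒢`-sets of finite measure
      (∀ (f : Lp Y ⊤ μ) (F : Set α), MeasurableSet[m] F → μ F < ⊤ →
        ∫ a in F, f a ∂μ = ∫ a in F, (P f) a ∂μ) := by
  have hrange (f : Lp Y ∞ μ) : AEStronglyMeasurable[m] (condExpLinfty Y μ hm f) μ :=
    aestronglyMeasurable_condExpLinftyFun hm f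
  have hfix (f : Lp Y ∞ μ) (hf : AEStronglyMeasurable[m] f μ) : condExpLinfty Y μ hm f = f :=
    (eq_condExpLinftyFun_of_forall_setIntegral_eq hm hf fun _ _ _ => rfl).symm
  refine ⟨condExpLinfty Y μ hm, ⟨norm_condExpLinfty_le hm, fun f => hfix _ (hrange f), hrange,
    hfix, fun f s hs hμs => (setIntegral_condExpLinftyFun hm f hs hμs).symm⟩, ?_⟩
  rintro Q ⟨-, -, hQrange, -, hQavg⟩
  ext1 f
  exact eq_condExpLinftyFun_of_forall_setIntegral_eq hm (hQrange f)
    fun s hs hμs => (hQavg f s hs hμs).symm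
end

section
/- Let (A, 𝒜, μ) be a measure space, 𝒢 ⊂ 𝒜 a sub-σ-algebra with the restricted measure σ-finite, X a Banach space and Y = X* its dual (or more generally ⟨X,Y⟩ a Banach dual pair such that both vector-valued conditional expectations exist). Then the duality relation ∫_A ⟨E¹_{𝒢,X} f, g⟩ dμ = ∫_A ⟨f, E^∞_{𝒢,Y} g⟩ dμ holds for all f ∈ L¹(A; X) and g ∈ L^∞(A; Y). -/
open MeasureTheory
open scoped ENNReal

/-!
`E¹` lands in the `𝒢`-measurable functions and `Q g` is `𝒢`-measurable, so both sides equal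
`∫ ⟨E¹ f, Q g⟩`. On the left, `g` may be replaced by `Q g` because the two have the same
integrals over `𝒢`-measurable sets of finite measure, hence pair equally with every
`𝒢`-measurable `L¹` function (check on indicators, then extend by density). On the right,
`E¹ f` may be replaced by `f` by the pull-out property of the conditional expectation.
-/

section Pairing

variable {α E F G : Type*} {m m0 : MeasurableSpace α} {μ : Measure α}
  [NormedAddCommGroup E] [NormedSpace ℝ E] [NormedAddCommGroup F] [NormedSpace ℝ F]
  [NormedAddCommGroup G] [NormedSpace ℝ G] [CompleteSpace G] (B : F →L[ℝ] E →L[ℝ] G)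

theorem integral_bilin_indicatorConstLp [CompleteSpace F] {p : ℝ≥0∞} {g : α → F} {s : Set α}
    (hs : MeasurableSet[m0] s) (hμs : μ s ≠ ∞) (hg : IntegrableOn g s μ) (c : E) :
    ∫ a, B (g a) (indicatorConstLp p hs hμs c a) ∂μ = B (∫ a in s, g a ∂μ) c := by
  calc ∫ a, B (g a) (indicatorConstLp p hs hμs c a) ∂μ
      = ∫ a, s.indicator (fun a => B.flip c (g a)) a ∂μ := by
        refine integral_congr_ae ?_
        filter_upwards [indicatorConstLp_coeFn (p := p) (hs := hs) (hμs := hμs) (c := c)]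
          with a ha
        by_cases has : a ∈ s <;> simp [ha, has]
    _ = B.flip c (∫ a in s, g a ∂μ) := by
        rw [integral_indicator hs, (B.flip c).integral_comp_comm hg]
    _ = B (∫ a in s, g a ∂μ) c := rfl

theorem integral_bilin_eq_of_forall_setIntegral_eq [CompleteSpace F] (hm : m ≤ m0)
    {g₁ g₂ : Lp F ∞ μ}
    (hg : ∀ s, MeasurableSet[m] s → μ s < ∞ → ∫ a in s, g₁ a ∂μ = ∫ a in s, g₂ a ∂μ)
    (f : Lp E 1 μ) (hf : AEStronglyMeasurable[m] f μ) :
    ∫ a, B (g₁ a) (f a) ∂μ = ∫ a, B (g₂ a) (f a) ∂μ := by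
  simp only [← B.lpPairing_eq_integral]
  refine Lp.induction_stronglyMeasurable hm ENNReal.one_ne_top
    (fun f => B.lpPairing μ ∞ 1 g₁ f = B.lpPairing μ ∞ 1 g₂ f) ?_ ?_ ?_ f hf
  · intro c s hs hμs
    simp only [Lp.simpleFunc.coe_indicatorConst, B.lpPairing_eq_integral,
      integral_bilin_indicatorConstLp B _ _ (integrableOn_Lp_of_measure_ne_top _ le_top hμs.ne),
      hg _ hs hμs]
  · intro _ _ _ _ _ _ _ h₁ h₂
    simp only [map_add, h₁, h₂]
  · exact isClosed_eq ((B.lpPairing μ ∞ 1 g₁).continuous.comp continuous_subtype_val)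
      ((B.lpPairing μ ∞ 1 g₂).continuous.comp continuous_subtype_val)

theorem integral_bilin_condExp_of_aestronglyMeasurable_left [CompleteSpace E] (hm : m ≤ m0)
    [SigmaFinite (μ.trim hm)] {g : α → F} {f : α → E} (hgm : AEStronglyMeasurable[m] g μ)
    (hg : MemLp g ∞ μ) (hf : Integrable f μ) :
    ∫ a, B (g a) ((μ[f | m]) a) ∂μ = ∫ a, B (g a) (f a) ∂μ := by
  have hBgf : Integrable (fun a => B (g a) (f a)) μ :=
    memLp_one_iff_integrable.1 (B.memLp_of_bilin 1 hg (memLp_one_iff_integrable.2 hf))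
  calc ∫ a, B (g a) ((μ[f | m]) a) ∂μ = ∫ a, (μ[fun a => B (g a) (f a) | m]) a ∂μ :=
        integral_congr_ae (condExp_bilin_of_aestronglyMeasurable_left B hgm hBgf hf).symm
    _ = ∫ a, B (g a) (f a) ∂μ := integral_condExp hm

end Pairing

theorem condexp_l1_linfty_duality_general
    {α : Type*} {m m0 : MeasurableSpace α} (μ : Measure α) (hm : m ≤ m0)
    [SigmaFinite (μ.trim hm)]
    (X : Type*) [NormedAddCommGroup X] [NormedSpace ℝ X] [CompleteSpace X]
    (Q : Lp (X →L[ℝ] ℝ) ⊤ μ →L[ℝ] Lp (X →L[ℝ] ℝ) ⊤ μ)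
    (hQrange : ∀ g : Lp (X →L[ℝ] ℝ) ⊤ μ,
      ∃ g' : α → X →L[ℝ] ℝ, StronglyMeasurable[m] g' ∧ ⇑(Q g) =ᵐ[μ] g')
    (hQavg : ∀ (g : Lp (X →L[ℝ] ℝ) ⊤ μ) (F : Set α), MeasurableSet[m] F → μ F < ⊤ →
      ∫ a in F, g a ∂μ = ∫ a in F, (Q g) a ∂μ) :
    ∀ (f : α →₁[μ] X) (g : Lp (X →L[ℝ] ℝ) ⊤ μ),
      ∫ a, (g a) ((condExpL1CLM X hm μ f) a) ∂μ = ∫ a, ((Q g) a) (f a) ∂μ := by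
  intro f g
  let B := ContinuousLinearMap.id ℝ (X →L[ℝ] ℝ)
  have hQm : AEStronglyMeasurable[m] (Q g) μ := hQrange g
  have hEf : μ[f | m] =ᵐ[μ] condExpL1CLM X hm μ f := by
    simpa only [Integrable.toL1_coeFn] using
      condExp_ae_eq_condExpL1CLM hm (L1.integrable_coeFn f)
  calc ∫ a, g a (condExpL1CLM X hm μ f a) ∂μ = ∫ a, B (Q g a) (condExpL1CLM X hm μ f a) ∂μ :=
        integral_bilin_eq_of_forall_setIntegral_eq B hm (hQavg g) _
          (aestronglyMeasurable_condExpL1CLM f)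
    _ = ∫ a, B (Q g a) ((μ[f | m]) a) ∂μ :=
        integral_congr_ae (hEf.symm.mono fun a ha => by simp only [ha])
    _ = ∫ a, Q g a (f a) ∂μ :=
        integral_bilin_condExp_of_aestronglyMeasurable_left B hm hQm (Lp.memLp _)
          (L1.integrable_coeFn f)

/-- **Duality between conditional expectation on `L¹(A;X)` and on `L^∞(A;Y)` with
`Y = X*`.** Let `m ≤ m0` have σ-finite trace, `X` a Banach space, `Y = X*`. If `Q`
is the conditional expectation on `L^∞(μ; X*)` (characterized by having strongly
`m`-measurable values and the averaging property on `m`-measurable sets of finite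
measure), then `∫ ⟨E¹_{𝒢,X} f, g⟩ dμ = ∫ ⟨f, Q g⟩ dμ` for all `f ∈ L¹(μ; X)` and
`g ∈ L^∞(μ; X*)`. -/
theorem condexp_l1_linfty_duality
    {α : Type*} {m m0 : MeasurableSpace α} (μ : Measure α) (hm : m ≤ m0)
    [SigmaFinite (μ.trim hm)]
    (X : Type*) [NormedAddCommGroup X] [NormedSpace ℝ X] [CompleteSpace X]
    (Q : Lp (X →L[ℝ] ℝ) ⊤ μ →L[ℝ] Lp (X →L[ℝ] ℝ) ⊤ μ)
    (hQrange : ∀ g : Lp (X →L[ℝ] ℝ) ⊤ μ,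
      ∃ g' : α → X →L[ℝ] ℝ, StronglyMeasurable[m] g' ∧ ⇑(Q g) =ᵐ[μ] g')
    (hQfix : ∀ g : Lp (X →L[ℝ] ℝ) ⊤ μ,
      (∃ g' : α → X →L[ℝ] ℝ, StronglyMeasurable[m] g' ∧ ⇑g =ᵐ[μ] g') → Q g = g)
    (hQavg : ∀ (g : Lp (X →L[ℝ] ℝ) ⊤ μ) (F : Set α), MeasurableSet[m] F → μ F < ⊤ →
      ∫ a in F, g a ∂μ = ∫ a in F, (Q g) a ∂μ) :
    ∀ (f : α →₁[μ] X) (g : Lp (X →L[ℝ] ℝ) ⊤ μ),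
      ∫ a, (g a) ((condExpL1CLM X hm μ f) a) ∂μ = ∫ a, ((Q g) a) (f a) ∂μ :=
  condexp_l1_linfty_duality_general μ hm X Q hQrange hQavg
end

section
/- Let E, G be Banach function spaces, T : E → G dominated by a positive bounded operator R, and Y a Banach space with a boundedly-complete Schauder basis (b_n) with basis constant K and biorthogonal functionals (b_n*). Then for every e ∈ E(Y), the series ∑_{n=0}^∞ T⟨b_n*, e⟩(a) b_n converges in Y for a.e. a, defining an element T_Y e ∈ G(Y) with pointwise norm ‖(T_Y e)(a)‖_Y ≤ K · R(‖e(·)‖_Y)(a) a.e.; the resulting operator T_Y : E(Y) → G(Y) is linear, bounded, and satisfies ⟨b_n*, T_Y e⟩ = T⟨b_n*, e⟩ for all n and all e ∈ E(Y). -/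
/-!
For `f ∈ E(Y)` with `‖f(·)‖ = e₀`, each coefficient function `⟨bₙ*, f⟩` is dominated by
`‖bₙ*‖ e₀`, hence lies in `E`, an ideal. For a functional `y*` of norm at most one,
`Σ_{n<N} y*(bₙ) ⟨bₙ*, f⟩` is the function `a ↦ y*(P_N f(a))` (`P_N` the `N`-th basis projection),
of modulus at most `K e₀`; domination turns this into `y*(Σ_{n<N} T⟨bₙ*, f⟩(x) bₙ) ≤ K R(e₀)(x)`
for a.e. `x`. Countably many such `y*` compute the norm on the separable span of the basis, so for
a.e. `x` the partial sums of `Σ T⟨bₙ*, f⟩(x) bₙ` are bounded by `K R(e₀)(x)` uniformly in `N`.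
Bounded completeness makes the series converge, and the remaining properties pass to the limit.
-/

open MeasureTheory

/-- `f` is a member of the Köthe–Bochner space `E(Y)`, with `e ∈ E` representing its
pointwise norm function `a ↦ ‖f a‖`. -/
def MemKB {α E : Type*} [MeasurableSpace α] {μ : Measure α}
    [NormedAddCommGroup E] [Lattice E] [IsOrderedAddMonoid E] [HasSolidNorm E] [NormedSpace ℝ E]
    {Y : Type*} [NormedAddCommGroup Y]
    (ι : E →ₗ[ℝ] (α →ₘ[μ] ℝ)) (f : α → Y) (e : E) : Prop :=
  AEStronglyMeasurable f μ ∧ (fun a => ‖f a‖) =ᵐ[μ] ⇑(ι e)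

/-- `TY` is (a function-level realization of) a bounded linear operator
`E(Y) → G(Y)` which is a `Y`-valued extension of `T : E → G` with respect to the
pairing `⟨Y*, Y⟩`, i.e. `⟨y*, T_Y e⟩ = T ⟨y*, e⟩` for all `e ∈ E(Y)`, `y* ∈ Y*`. -/
def IsVectorExtension {α β E G : Type*} [MeasurableSpace α] [MeasurableSpace β]
    {μ : Measure α} {ν : Measure β}
    [NormedAddCommGroup E] [Lattice E] [IsOrderedAddMonoid E] [HasSolidNorm E] [NormedSpace ℝ E]
    [NormedAddCommGroup G] [Lattice G] [IsOrderedAddMonoid G] [HasSolidNorm G] [NormedSpace ℝ G]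
    (ιE : E →ₗ[ℝ] (α →ₘ[μ] ℝ)) (ιG : G →ₗ[ℝ] (β →ₘ[ν] ℝ))
    (T : E →L[ℝ] G) {Y : Type*} [NormedAddCommGroup Y] [NormedSpace ℝ Y]
    (TY : (α → Y) → (β → Y)) : Prop :=
  -- maps `E(Y)` into `G(Y)`
  (∀ (f : α → Y) (e : E), MemKB ιE f e → ∃ g : G, MemKB ιG (TY f) g) ∧
  -- well-defined on a.e.-equivalence classes
  (∀ f g : α → Y, (∃ e : E, MemKB ιE f e) → f =ᵐ[μ] g → TY f =ᵐ[ν] TY g) ∧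
  -- additive and homogeneous
  (∀ f g : α → Y, (∃ e : E, MemKB ιE f e) → (∃ e : E, MemKB ιE g e) →
    TY (f + g) =ᵐ[ν] TY f + TY g) ∧
  (∀ (c : ℝ) (f : α → Y), (∃ e : E, MemKB ιE f e) → TY (c • f) =ᵐ[ν] c • TY f) ∧
  -- bounded
  (∃ C : ℝ, ∀ (f : α → Y) (e : E) (g : G), MemKB ιE f e → MemKB ιG (TY f) g →
    ‖g‖ ≤ C * ‖e‖) ∧
  -- the defining relation `⟨y*, T_Y e⟩ = T ⟨y*, e⟩`
  (∀ (f : α → Y) (y' : Y →L[ℝ] ℝ) (e exy : E), MemKB ιE f e →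
    ((fun a => y' (f a)) =ᵐ[μ] ⇑(ιE exy)) →
    (fun b => y' (TY f b)) =ᵐ[ν] ⇑(ιG (T exy)))


section

open Filter Topology Finset

section CoeFn

variable {α M : Type*} [MeasurableSpace α] {μ : Measure α} [AddCommMonoid M] [Module ℝ M]
  (ι : M →ₗ[ℝ] (α →ₘ[μ] ℝ))

theorem coeFn_map_add (e e' : M) : ⇑(ι (e + e')) =ᵐ[μ] fun a => ι e a + ι e' a := by
  rw [map_add]
  exact AEEqFun.coeFn_add _ _

theorem coeFn_map_smul (r : ℝ) (e : M) : ⇑(ι (r • e)) =ᵐ[μ] fun a => r * ι e a := by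
  rw [map_smul]
  exact AEEqFun.coeFn_smul _ _

theorem ae_map_sum_smul_eq {Y F : Type*} [AddCommGroup Y] [Module ℝ Y] [FunLike F Y ℝ]
    [LinearMapClass F ℝ Y ℝ] (y' : F) (b : ℕ → Y) (d : ℕ → M) (N : ℕ) :
    ∀ᵐ a ∂μ, ι (∑ n ∈ range N, y' (b n) • d n) a = y' (∑ n ∈ range N, ι (d n) a • b n) := by
  induction N with
  | zero =>
    filter_upwards [AEEqFun.coeFn_zero (μ := μ) (β := ℝ)] with a ha
    simpa using ha
  | succ N ih =>
    filter_upwards [ih, coeFn_map_add ι (∑ n ∈ range N, y' (b n) • d n) (y' (b N) • d N),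
      coeFn_map_smul ι (y' (b N)) (d N)] with a h h_add h_smul
    rw [sum_range_succ, sum_range_succ, h_add, h, h_smul, map_add, map_smul, smul_eq_mul, mul_comm]

end CoeFn

theorem MemKB.const_smul {α E Y : Type*} [MeasurableSpace α] {μ : Measure α}
    [NormedAddCommGroup E] [Lattice E] [IsOrderedAddMonoid E] [HasSolidNorm E] [NormedSpace ℝ E]
    [NormedAddCommGroup Y] [NormedSpace ℝ Y] {ι : E →ₗ[ℝ] (α →ₘ[μ] ℝ)} {f : α → Y} {e : E}
    (hf : MemKB ι f e) (r : ℝ) : MemKB ι (r • f) (|r| • e) := by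
  refine ⟨hf.1.const_smul r, ?_⟩
  filter_upwards [hf.2, coeFn_map_smul ι |r| e] with a ha ha'
  rw [ha', Pi.smul_apply, norm_smul, Real.norm_eq_abs, ha]

namespace IsBanachFunctionSpace

variable {α E : Type*} [MeasurableSpace α] {μ : Measure α} [NormedAddCommGroup E] [Lattice E]
  [IsOrderedAddMonoid E] [HasSolidNorm E] [NormedSpace ℝ E] [CompleteSpace E]
  {ι : E →ₗ[ℝ] (α →ₘ[μ] ℝ)} (h : IsBanachFunctionSpace μ E ι)
include h

theorem eq_of_ae_eq {e e' : E} (hee : ⇑(ι e) =ᵐ[μ] ⇑(ι e')) : e = e' :=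
  h.inj (AEEqFun.ext hee)

theorem nonneg_iff_ae_nonneg {e : E} : 0 ≤ e ↔ ∀ᵐ a ∂μ, 0 ≤ ι e a := by
  constructor
  · intro he
    filter_upwards [h.map_abs e] with a ha
    rw [abs_of_nonneg he] at ha
    exact ha ▸ abs_nonneg _
  · intro he
    have habs : |e| = e := h.eq_of_ae_eq <| by
      filter_upwards [h.map_abs e, he] with a ha ha'
      rw [ha, abs_of_nonneg ha']
    exact habs ▸ abs_nonneg e

theorem le_iff_ae_le {e e' : E} : e ≤ e' ↔ ∀ᵐ a ∂μ, ι e a ≤ ι e' a := by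
  have hsub : ⇑(ι (e' - e)) =ᵐ[μ] fun a => ι e' a - ι e a := by
    rw [map_sub]
    exact AEEqFun.coeFn_sub _ _
  rw [← sub_nonneg, h.nonneg_iff_ae_nonneg]
  refine eventually_congr ?_
  filter_upwards [hsub] with a ha
  rw [ha, sub_nonneg]

theorem exists_ae_eq_of_abs_le {F : α → ℝ} (hF : AEStronglyMeasurable F μ) {g : E}
    (hle : ∀ᵐ a ∂μ, |F a| ≤ ι g a) : ∃ e : E, ⇑(ι e) =ᵐ[μ] F ∧ |e| ≤ g := by
  obtain ⟨e, he⟩ := h.ideal (AEEqFun.mk F hF) g <| by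
    filter_upwards [hle, AEEqFun.coeFn_mk F hF] with a ha ha'
    exact ha' ▸ ha.trans (le_abs_self _)
  have hFe : ⇑(ι e) =ᵐ[μ] F := he ▸ AEEqFun.coeFn_mk F hF
  refine ⟨e, hFe, h.le_iff_ae_le.2 ?_⟩
  filter_upwards [h.map_abs e, hFe, hle] with a habs hFa ha
  rwa [habs, hFa]

theorem exists_memKB_of_norm_le {Y : Type*} [NormedAddCommGroup Y] {f : α → Y}
    (hf : AEStronglyMeasurable f μ) {g : E} (hle : ∀ᵐ a ∂μ, ‖f a‖ ≤ ι g a) :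
    ∃ e : E, MemKB ι f e ∧ ‖e‖ ≤ ‖g‖ := by
  obtain ⟨e, he, habs⟩ := h.exists_ae_eq_of_abs_le hf.norm (g := g) (by simpa using hle)
  exact ⟨e, ⟨hf, he.symm⟩, norm_le_norm_of_abs_le_abs (habs.trans (le_abs_self g))⟩

theorem norm_smul_map_le_of_memKB {G Y : Type*} [NormedAddCommGroup G] [NormedSpace ℝ G]
    [NormedAddCommGroup Y] {K : ℝ} (hK : ∀ y : Y, 0 ≤ K * ‖y‖) {f : α → Y} {e : E}
    (hf : MemKB ι f e) (R : E →L[ℝ] G) : ‖K • R e‖ ≤ K * ‖R‖ * ‖e‖ := by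
  by_cases hK0 : 0 ≤ K
  · rw [norm_smul, Real.norm_of_nonneg hK0, mul_assoc]
    exact mul_le_mul_of_nonneg_left (R.le_opNorm e) hK0
  have hY : ∀ y : Y, ‖y‖ = 0 := fun y => by nlinarith [hK y, norm_nonneg y]
  have he : e = 0 := h.eq_of_ae_eq <| by
    rw [map_zero]
    filter_upwards [hf.2, AEEqFun.coeFn_zero (μ := μ) (β := ℝ)] with a ha h0
    rw [← ha, hY, h0, Pi.zero_apply]
  simp [he]

end IsBanachFunctionSpace

theorem le_of_abs_le_of_dominated {E G F : Type*} [Lattice E] [AddCommGroup E]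
    [IsOrderedAddMonoid E] [Lattice G] [AddCommGroup G] [IsOrderedAddMonoid G] [FunLike F E G]
    [AddMonoidHomClass F E G] {T : E → G} {R : F} (hRpos : ∀ e, 0 ≤ e → 0 ≤ R e)
    (hdom : ∀ e, |T e| ≤ R |e|) {s g : E} (hs : |s| ≤ g) : T s ≤ R g := by
  have hmono : R |s| ≤ R g := by
    simpa [map_sub] using hRpos (g - |s|) (sub_nonneg.2 hs)
  exact (le_abs_self _).trans ((hdom s).trans hmono)

theorem TopologicalSpace.IsSeparable.exists_norming_seq {Y : Type*} [NormedAddCommGroup Y]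
    [NormedSpace ℝ Y] {s : Set Y} (hs : IsSeparable s) :
    ∃ ys : ℕ → StrongDual ℝ Y, (∀ k, ‖ys k‖ ≤ 1) ∧
      ∀ z ∈ s, ∀ C : ℝ, (∀ k, ys k z ≤ C) → ‖z‖ ≤ C := by
  obtain ⟨D, hD, hsD⟩ := hs
  obtain ⟨u, hu⟩ := (hD.insert 0).exists_eq_range (Set.insert_nonempty 0 D)
  choose ys hys_norm hys_eq using fun k => exists_dual_vector'' ℝ (u k)
  refine ⟨ys, hys_norm, fun z hz C hC => ?_⟩
  -- `‖w‖ ≤ C + ‖w - z‖` is a closed condition on `w` that holds on the dense family `u`.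
  have hclosed : IsClosed {w : Y | ‖w‖ ≤ C + ‖w - z‖} :=
    isClosed_le continuous_norm (continuous_const.add (continuous_id.sub continuous_const).norm)
  have hu_mem : Set.range u ⊆ {w : Y | ‖w‖ ≤ C + ‖w - z‖} := by
    rintro _ ⟨k, rfl⟩
    have hk : ys k (u k - z) ≤ ‖u k - z‖ :=
      (le_abs_self _).trans ((ys k).le_of_opNorm_le (hys_norm k) _ |>.trans_eq (one_mul _))
    have := hC k
    simp only [map_sub, hys_eq k, RCLike.ofReal_real_eq_id, id] at hk
    exact (by linarith : ‖u k‖ ≤ C + ‖u k - z‖)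
  have hz' : z ∈ closure (Set.range u) :=
    closure_mono (hu ▸ Set.subset_insert 0 D) (hsD hz)
  simpa using hclosed.closure_subset_iff.2 hu_mem hz'

theorem apply_eq_of_tendsto_sum_smul {Y : Type*} [NormedAddCommGroup Y] [NormedSpace ℝ Y]
    {b : ℕ → Y} {bstar : ℕ → StrongDual ℝ Y}
    (hbiorth : ∀ n m : ℕ, bstar n (b m) = if n = m then 1 else 0) {a : ℕ → ℝ} {y : Y}
    (hy : Tendsto (fun N => ∑ n ∈ range N, a n • b n) atTop (𝓝 y)) (n : ℕ) :
    bstar n y = a n := by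
  have hpartial : ∀ N, n < N → bstar n (∑ m ∈ range N, a m • b m) = a n := by
    intro N hN
    simp [map_sum, hbiorth, mem_range.2 hN]
  refine tendsto_nhds_unique (((bstar n).continuous.tendsto y).comp hy) ?_
  exact tendsto_const_nhds.congr' <|
    (eventually_gt_atTop n).mono fun N hN => (hpartial N hN).symm

section BasisPartialSum

variable {β G Y : Type*} [MeasurableSpace β] {ν : Measure β} [AddCommMonoid G] [Module ℝ G]
  [NormedAddCommGroup Y] [NormedSpace ℝ Y] (ιG : G →ₗ[ℝ] (β →ₘ[ν] ℝ)) (b : ℕ → Y)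

noncomputable def basisPartialSum (d : ℕ → G) (N : ℕ) (x : β) : Y :=
  ∑ n ∈ range N, ιG (d n) x • b n

theorem aestronglyMeasurable_basisPartialSum (d : ℕ → G) (N : ℕ) :
    AEStronglyMeasurable (basisPartialSum ιG b d N) ν :=
  Finset.aestronglyMeasurable_fun_sum _ fun n _ => (ιG (d n)).aestronglyMeasurable.smul_const _

theorem ae_basisPartialSum_add (d d' : ℕ → G) : ∀ᵐ x ∂ν, ∀ N,
    basisPartialSum ιG b (fun n => d n + d' n) N x =
      basisPartialSum ιG b d N x + basisPartialSum ιG b d' N x := by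
  filter_upwards [ae_all_iff.2 fun n => coeFn_map_add ιG (d n) (d' n)] with x hx N
  simp only [basisPartialSum, hx, add_smul, sum_add_distrib]

theorem ae_basisPartialSum_smul (r : ℝ) (d : ℕ → G) : ∀ᵐ x ∂ν, ∀ N,
    basisPartialSum ιG b (fun n => r • d n) N x = r • basisPartialSum ιG b d N x := by
  filter_upwards [ae_all_iff.2 fun n => coeFn_map_smul ιG r (d n)] with x hx N
  simp only [basisPartialSum, hx, smul_sum, smul_smul]

theorem ae_apply_eq_of_tendsto_basisPartialSum {bstar : ℕ → StrongDual ℝ Y}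
    (hbiorth : ∀ n m : ℕ, bstar n (b m) = if n = m then 1 else 0) {d : ℕ → G} {F : β → Y}
    (hF : ∀ᵐ x ∂ν, Tendsto (fun N => basisPartialSum ιG b d N x) atTop (𝓝 (F x))) (n : ℕ) :
    (fun x => bstar n (F x)) =ᵐ[ν] ⇑(ιG (d n)) := by
  filter_upwards [hF] with x hx
  exact apply_eq_of_tendsto_sum_smul hbiorth hx n

end BasisPartialSum

section

variable {α β E G Y : Type*} [MeasurableSpace α] [MeasurableSpace β] {μ : Measure α}
  {ν : Measure β} [AddCommMonoid E] [Module ℝ E] [AddCommMonoid G] [Module ℝ G]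
  [NormedAddCommGroup Y] [NormedSpace ℝ Y]
  (ιE : E →ₗ[ℝ] (α →ₘ[μ] ℝ)) (ιG : G →ₗ[ℝ] (β →ₘ[ν] ℝ)) (b : ℕ → Y) (bstar : ℕ → StrongDual ℝ Y)

/-- Junk (an arbitrary element of `E`) when `a ↦ bₙ*(f a)` has no representative in `E`. -/
noncomputable def coeff (f : α → Y) (n : ℕ) : E :=
  Classical.epsilon fun c : E => (fun a => bstar n (f a)) =ᵐ[μ] ⇑(ιE c)

noncomputable def basisExtension (T : E →ₗ[ℝ] G) (f : α → Y) (x : β) : Y :=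
  limUnder atTop fun N => basisPartialSum ιG b (fun n => T (coeff ιE bstar f n)) N x

end

section BasisExtension

variable {α β E G Y : Type*} [MeasurableSpace α] [MeasurableSpace β] {μ : Measure α}
  {ν : Measure β}
  [NormedAddCommGroup E] [Lattice E] [IsOrderedAddMonoid E] [HasSolidNorm E] [NormedSpace ℝ E]
  [CompleteSpace E]
  [NormedAddCommGroup G] [Lattice G] [IsOrderedAddMonoid G] [HasSolidNorm G] [NormedSpace ℝ G]
  [CompleteSpace G]
  [NormedAddCommGroup Y] [NormedSpace ℝ Y]
  {ιE : E →ₗ[ℝ] (α →ₘ[μ] ℝ)} {ιG : G →ₗ[ℝ] (β →ₘ[ν] ℝ)}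
  {b : ℕ → Y} {bstar : ℕ → StrongDual ℝ Y} {K : ℝ} {T : E →ₗ[ℝ] G} {R : E →L[ℝ] G}
  {f : α → Y} {e0 : E} {c : ℕ → E}
  (hE : IsBanachFunctionSpace μ E ιE)
include hE

theorem coeff_ae_eq (hf : MemKB ιE f e0) (n : ℕ) :
    (fun a => bstar n (f a)) =ᵐ[μ] ⇑(ιE (coeff ιE bstar f n)) := by
  refine Classical.epsilon_spec (p := fun c : E => _ =ᵐ[μ] ⇑(ιE c)) ?_
  obtain ⟨c, hc, -⟩ := hE.exists_ae_eq_of_abs_le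
    ((bstar n).continuous.comp_aestronglyMeasurable hf.1) (g := ‖bstar n‖ • e0) <| by
      filter_upwards [hf.2, coeFn_map_smul ιE ‖bstar n‖ e0] with a ha ha'
      rw [ha', ← ha, ← Real.norm_eq_abs]
      exact (bstar n).le_opNorm (f a)
  exact ⟨c, hc.symm⟩

theorem coeff_eq_of_ae_eq (hc : ∀ n, (fun a => bstar n (f a)) =ᵐ[μ] ⇑(ιE (c n))) :
    coeff ιE bstar f = c :=
  funext fun n => hE.eq_of_ae_eq <|
    (Classical.epsilon_spec (p := fun c : E => _ =ᵐ[μ] ⇑(ιE c)) ⟨c n, hc n⟩).symm.trans (hc n)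

variable (hK : ∀ (y : Y) (N : ℕ), ‖∑ n ∈ range N, bstar n y • b n‖ ≤ K * ‖y‖)
include hK

theorem abs_sum_smul_le_smul_of_memKB (hf : MemKB ιE f e0)
    (hc : ∀ n, (fun a => bstar n (f a)) =ᵐ[μ] ⇑(ιE (c n)))
    {y' : StrongDual ℝ Y} (hy' : ‖y'‖ ≤ 1) (N : ℕ) :
    |∑ n ∈ range N, y' (b n) • c n| ≤ K • e0 := by
  refine hE.le_iff_ae_le.2 ?_
  filter_upwards [hE.map_abs (∑ n ∈ range N, y' (b n) • c n), ae_all_iff.2 hc, hf.2,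
    ae_map_sum_smul_eq ιE y' b c N, coeFn_map_smul ιE K e0]
    with a habs hca hfa hsum hK_e0
  have hcoeff : ∑ n ∈ range N, ιE (c n) a • b n = ∑ n ∈ range N, bstar n (f a) • b n :=
    sum_congr rfl fun n _ => by rw [hca n]
  rw [habs, hK_e0, ← hfa]
  calc |ιE (∑ n ∈ range N, y' (b n) • c n) a|
      = ‖y' (∑ n ∈ range N, bstar n (f a) • b n)‖ := by
        rw [hsum, hcoeff, Real.norm_eq_abs]
    _ ≤ 1 * ‖∑ n ∈ range N, bstar n (f a) • b n‖ := y'.le_of_opNorm_le hy' _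
    _ ≤ K * ‖f a‖ := (one_mul _).trans_le (hK (f a) N)

variable (hG : IsBanachFunctionSpace ν G ιG) (hRpos : ∀ e : E, 0 ≤ e → 0 ≤ R e)
  (hdom : ∀ e : E, |T e| ≤ R |e|)
include hG hRpos hdom

theorem ae_apply_basisPartialSum_le (hf : MemKB ιE f e0)
    (hc : ∀ n, (fun a => bstar n (f a)) =ᵐ[μ] ⇑(ιE (c n)))
    {y' : StrongDual ℝ Y} (hy' : ‖y'‖ ≤ 1) (N : ℕ) :
    ∀ᵐ x ∂ν, y' (basisPartialSum ιG b (fun n => T (c n)) N x) ≤ K * ιG (R e0) x := by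
  have hTR := le_of_abs_le_of_dominated hRpos hdom
    (abs_sum_smul_le_smul_of_memKB hE hK hf hc hy' N)
  have hT_sum : T (∑ n ∈ range N, y' (b n) • c n) = ∑ n ∈ range N, y' (b n) • T (c n) := by
    simp only [map_sum, map_smul]
  rw [hT_sum, map_smul] at hTR
  filter_upwards [hG.le_iff_ae_le.1 hTR, coeFn_map_smul ιG K (R e0),
    ae_map_sum_smul_eq ιG y' b (fun n => T (c n)) N] with x hx hK_R hsum
  rwa [hsum, hK_R] at hx

theorem ae_norm_basisPartialSum_le (hf : MemKB ιE f e0)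
    (hc : ∀ n, (fun a => bstar n (f a)) =ᵐ[μ] ⇑(ιE (c n))) :
    ∀ᵐ x ∂ν, ∀ N, ‖basisPartialSum ιG b (fun n => T (c n)) N x‖ ≤ K * ιG (R e0) x := by
  obtain ⟨ys, hys_norm, hys⟩ :=
    ((Set.countable_range b).isSeparable.span (R := ℝ)).exists_norming_seq
  have hae := ae_all_iff.2 fun k => ae_all_iff.2 fun N =>
    ae_apply_basisPartialSum_le hE hK hG hRpos hdom hf hc (hys_norm k) N
  filter_upwards [hae] with x hx N
  refine hys _ ?_ _ fun k => hx k N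
  exact Submodule.sum_mem _ fun n _ => Submodule.smul_mem _ _ (Submodule.subset_span ⟨n, rfl⟩)

variable (hbc : ∀ a : ℕ → ℝ, (∃ C : ℝ, ∀ N, ‖∑ n ∈ range N, a n • b n‖ ≤ C) →
  ∃ y : Y, Tendsto (fun N => ∑ n ∈ range N, a n • b n) atTop (𝓝 y))
include hbc

theorem ae_tendsto_basisExtension (hf : MemKB ιE f e0)
    (hc : ∀ n, (fun a => bstar n (f a)) =ᵐ[μ] ⇑(ιE (c n))) :
    ∀ᵐ x ∂ν, Tendsto (fun N => basisPartialSum ιG b (fun n => T (c n)) N x) atTop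
      (𝓝 (basisExtension ιE ιG b bstar T f x)) := by
  filter_upwards [ae_norm_basisPartialSum_le hE hK hG hRpos hdom hf hc] with x hx
  obtain ⟨y, hy⟩ := hbc (fun n => ιG (T (c n)) x) ⟨_, hx⟩
  have hy' : Tendsto (fun N => basisPartialSum ιG b (fun n => T (c n)) N x) atTop (𝓝 y) := hy
  rwa [basisExtension, coeff_eq_of_ae_eq hE hc, hy'.limUnder_eq]

theorem ae_norm_basisExtension_le (hf : MemKB ιE f e0) :
    ∀ᵐ x ∂ν, ‖basisExtension ιE ιG b bstar T f x‖ ≤ K * ιG (R e0) x := by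
  filter_upwards [ae_tendsto_basisExtension hE hK hG hRpos hdom hbc hf (coeff_ae_eq hE hf),
    ae_norm_basisPartialSum_le hE hK hG hRpos hdom hf (coeff_ae_eq hE hf)] with x hx hbound
  exact le_of_tendsto' hx.norm hbound

theorem exists_memKB_basisExtension (hf : MemKB ιE f e0) :
    ∃ g0 : G, MemKB ιG (basisExtension ιE ιG b bstar T f) g0 ∧ ‖g0‖ ≤ K * ‖R‖ * ‖e0‖ := by
  have hmeas : AEStronglyMeasurable (basisExtension ιE ιG b bstar T f) ν :=
    aestronglyMeasurable_of_tendsto_ae atTop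
      (fun N => aestronglyMeasurable_basisPartialSum ιG b _ N)
      (ae_tendsto_basisExtension hE hK hG hRpos hdom hbc hf (coeff_ae_eq hE hf))
  obtain ⟨g0, hg0, hnorm⟩ := hG.exists_memKB_of_norm_le hmeas (g := K • R e0) <| by
    filter_upwards [ae_norm_basisExtension_le hE hK hG hRpos hdom hbc hf,
      coeFn_map_smul ιG K (R e0)] with x hx hK_R
    rwa [hK_R]
  -- `N = 0` in `hK`: a negative basis constant is only possible for `Y = 0`.
  have hK0 : ∀ y : Y, 0 ≤ K * ‖y‖ := fun y => by simpa using hK y 0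
  exact ⟨g0, hg0, hnorm.trans (hE.norm_smul_map_le_of_memKB hK0 hf R)⟩

theorem basisExtension_add {g : α → Y} {ef eg : E} (hf : MemKB ιE f ef) (hg : MemKB ιE g eg) :
    basisExtension ιE ιG b bstar T (f + g) =ᵐ[ν]
      basisExtension ιE ιG b bstar T f + basisExtension ιE ιG b bstar T g := by
  obtain ⟨efg, hfg, -⟩ := hE.exists_memKB_of_norm_le (hf.1.add hg.1) (g := ef + eg) <| by
    filter_upwards [hf.2, hg.2, coeFn_map_add ιE ef eg] with a hfa hga hsum
    rw [hsum, ← hfa, ← hga]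
    exact norm_add_le _ _
  have hc : ∀ n, (fun a => bstar n ((f + g) a)) =ᵐ[μ]
      ⇑(ιE (coeff ιE bstar f n + coeff ιE bstar g n)) := fun n => by
    filter_upwards [coeff_ae_eq hE hf n, coeff_ae_eq hE hg n, coeFn_map_add ιE _ _]
      with a hfa hga hsum
    rw [hsum, Pi.add_apply, map_add, hfa, hga]
  have hconv := ae_tendsto_basisExtension hE hK hG hRpos hdom hbc hfg hc
  simp only [map_add] at hconv
  filter_upwards [hconv,
    ae_tendsto_basisExtension hE hK hG hRpos hdom hbc hf (coeff_ae_eq hE hf),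
    ae_tendsto_basisExtension hE hK hG hRpos hdom hbc hg (coeff_ae_eq hE hg),
    ae_basisPartialSum_add ιG b (fun n => T (coeff ιE bstar f n))
      (fun n => T (coeff ιE bstar g n))] with x hx hfx hgx hsum
  simp only [hsum] at hx
  exact tendsto_nhds_unique hx (hfx.add hgx)

theorem basisExtension_smul (r : ℝ) (hf : MemKB ιE f e0) :
    basisExtension ιE ιG b bstar T (r • f) =ᵐ[ν] r • basisExtension ιE ιG b bstar T f := by
  have hc : ∀ n, (fun a => bstar n ((r • f) a)) =ᵐ[μ] ⇑(ιE (r • coeff ιE bstar f n)) :=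
    fun n => by
      filter_upwards [coeff_ae_eq hE hf n, coeFn_map_smul ιE r _] with a hfa hsmul
      rw [hsmul, Pi.smul_apply, map_smul, hfa, smul_eq_mul]
  have hconv := ae_tendsto_basisExtension hE hK hG hRpos hdom hbc (hf.const_smul r) hc
  simp only [map_smul] at hconv
  filter_upwards [hconv,
    ae_tendsto_basisExtension hE hK hG hRpos hdom hbc hf (coeff_ae_eq hE hf),
    ae_basisPartialSum_smul ιG b r (fun n => T (coeff ιE bstar f n))] with x hx hfx hsmul
  simp only [hsmul] at hx
  exact tendsto_nhds_unique hx (hfx.const_smul r)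

end BasisExtension

end

open Filter Topology in
theorem extension_via_boundedly_complete_basis_general
    {α β E G : Type*} [MeasurableSpace α] [MeasurableSpace β]
    {μ : Measure α} {ν : Measure β}
    [NormedAddCommGroup E] [Lattice E] [IsOrderedAddMonoid E] [HasSolidNorm E] [NormedSpace ℝ E] [CompleteSpace E]
    [NormedAddCommGroup G] [Lattice G] [IsOrderedAddMonoid G] [HasSolidNorm G] [NormedSpace ℝ G] [CompleteSpace G]
    (ιE : E →ₗ[ℝ] (α →ₘ[μ] ℝ)) (ιG : G →ₗ[ℝ] (β →ₘ[ν] ℝ))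
    (hE : IsBanachFunctionSpace μ E ιE) (hG : IsBanachFunctionSpace ν G ιG)
    (T : E →ₗ[ℝ] G) (R : E →L[ℝ] G)
    (hRpos : ∀ e : E, 0 ≤ e → 0 ≤ R e)
    (hdom : ∀ e : E, |T e| ≤ R |e|)
    {Y : Type*} [NormedAddCommGroup Y] [NormedSpace ℝ Y]
    (b : ℕ → Y) (bstar : ℕ → Y →L[ℝ] ℝ) (K : ℝ)
    -- `(bₙ*)` is biorthogonal to `(bₙ)`
    (hbiorth : ∀ n m : ℕ, bstar n (b m) = if n = m then 1 else 0)
    -- with basis constant `K`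
    (hK : ∀ (y : Y) (N : ℕ), ‖∑ n ∈ Finset.range N, bstar n y • b n‖ ≤ K * ‖y‖)
    -- and boundedly complete
    (hbc : ∀ a : ℕ → ℝ, (∃ C : ℝ, ∀ N, ‖∑ n ∈ Finset.range N, a n • b n‖ ≤ C) →
      ∃ y : Y, Tendsto (fun N => ∑ n ∈ Finset.range N, a n • b n) atTop (𝓝 y)) :
    -- every `f ∈ E(Y)` has coefficient functions `⟨bₙ*, f⟩` in `E`, and …
    (∀ (f : α → Y) (e0 : E), MemKB ιE f e0 →
      ∃ c : ℕ → E, ∀ n, (fun a => bstar n (f a)) =ᵐ[μ] ⇑(ιE (c n))) ∧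
    ∃ TY : (α → Y) → (β → Y),
      (∀ (f : α → Y) (e0 : E) (c : ℕ → E), MemKB ιE f e0 →
        (∀ n, (fun a => bstar n (f a)) =ᵐ[μ] ⇑(ιE (c n))) →
        -- the series `∑ₙ T⟨bₙ*, f⟩(b) bₙ` converges a.e. to `(T_Y f)(b)`
        (∀ᵐ x ∂ν, Tendsto
            (fun N => ∑ n ∈ Finset.range N, (ιG (T (c n))) x • b n)
            atTop (𝓝 (TY f x))) ∧
        -- pointwise norm bound
        (∀ᵐ x ∂ν, ‖TY f x‖ ≤ K * (ιG (R e0)) x) ∧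
        -- `T_Y f ∈ G(Y)`, with norm bound (boundedness of `T_Y`)
        (∃ g0 : G, MemKB ιG (TY f) g0 ∧ ‖g0‖ ≤ K * ‖R‖ * ‖e0‖) ∧
        -- the relation `⟨bₙ*, T_Y f⟩ = T⟨bₙ*, f⟩`
        (∀ n, (fun x => bstar n (TY f x)) =ᵐ[ν] ⇑(ιG (T (c n))))) ∧
      -- `T_Y` is linear
      (∀ f g : α → Y, (∃ e : E, MemKB ιE f e) → (∃ e : E, MemKB ιE g e) →
        TY (f + g) =ᵐ[ν] TY f + TY g) ∧
      (∀ (r : ℝ) (f : α → Y), (∃ e : E, MemKB ιE f e) →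
        TY (r • f) =ᵐ[ν] r • TY f) := by
  refine ⟨fun f e0 hf => ⟨coeff ιE bstar f, coeff_ae_eq hE hf⟩, basisExtension ιE ιG b bstar T,
    fun f e0 c hf hc => ?_,
    fun f g ⟨ef, hf⟩ ⟨eg, hg⟩ => basisExtension_add hE hK hG hRpos hdom hbc hf hg,
    fun r f ⟨e, hf⟩ => basisExtension_smul hE hK hG hRpos hdom hbc r hf⟩
  have hconv := ae_tendsto_basisExtension hE hK hG hRpos hdom hbc hf hc
  exact ⟨hconv, ae_norm_basisExtension_le hE hK hG hRpos hdom hbc hf,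
    exists_memKB_basisExtension hE hK hG hRpos hdom hbc hf,
    ae_apply_eq_of_tendsto_basisPartialSum ιG b hbiorth hconv⟩

open Filter Topology in
/-- **Extension via a boundedly-complete Schauder basis** (Lemma 3.4 in the paper).
Let `T : E → G` be dominated by a positive bounded operator `R` and let `Y` have a
boundedly-complete Schauder basis `(bₙ)` with basis constant `K` and biorthogonal
functionals `(bₙ*)`. Then for every `f ∈ E(Y)` the series `∑ₙ T⟨bₙ*, f⟩(b) bₙ`
converges in `Y` for a.e. `b`, defining an element `T_Y f ∈ G(Y)` with
`‖(T_Y f)(b)‖ ≤ K ⬝ (R ‖f(·)‖)(b)` a.e.; the resulting map `T_Y : E(Y) → G(Y)` is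
linear, bounded, and satisfies `⟨bₙ*, T_Y f⟩ = T⟨bₙ*, f⟩` for all `n`. -/
theorem extension_via_boundedly_complete_basis
    {α β E G : Type*} [MeasurableSpace α] [MeasurableSpace β]
    {μ : Measure α} {ν : Measure β}
    [NormedAddCommGroup E] [Lattice E] [IsOrderedAddMonoid E] [HasSolidNorm E] [NormedSpace ℝ E] [CompleteSpace E]
    [NormedAddCommGroup G] [Lattice G] [IsOrderedAddMonoid G] [HasSolidNorm G] [NormedSpace ℝ G] [CompleteSpace G]
    (ιE : E →ₗ[ℝ] (α →ₘ[μ] ℝ)) (ιG : G →ₗ[ℝ] (β →ₘ[ν] ℝ))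
    (hE : IsBanachFunctionSpace μ E ιE) (hG : IsBanachFunctionSpace ν G ιG)
    (T : E →ₗ[ℝ] G) (R : E →L[ℝ] G)
    (hRpos : ∀ e : E, 0 ≤ e → 0 ≤ R e)
    (hdom : ∀ e : E, |T e| ≤ R |e|)
    {Y : Type*} [NormedAddCommGroup Y] [NormedSpace ℝ Y] [CompleteSpace Y]
    (b : ℕ → Y) (bstar : ℕ → Y →L[ℝ] ℝ) (K : ℝ)
    -- `(bₙ*)` is biorthogonal to `(bₙ)`
    (hbiorth : ∀ n m : ℕ, bstar n (b m) = if n = m then 1 else 0)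
    -- `(bₙ)` is a Schauder basis
    (hbasis : ∀ y : Y, Tendsto (fun N => ∑ n ∈ Finset.range N, bstar n y • b n)
      atTop (𝓝 y))
    -- with basis constant `K`
    (hK : ∀ (y : Y) (N : ℕ), ‖∑ n ∈ Finset.range N, bstar n y • b n‖ ≤ K * ‖y‖)
    -- and boundedly complete
    (hbc : ∀ a : ℕ → ℝ, (∃ C : ℝ, ∀ N, ‖∑ n ∈ Finset.range N, a n • b n‖ ≤ C) →
      ∃ y : Y, Tendsto (fun N => ∑ n ∈ Finset.range N, a n • b n) atTop (𝓝 y)) :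
    -- every `f ∈ E(Y)` has coefficient functions `⟨bₙ*, f⟩` in `E`, and …
    (∀ (f : α → Y) (e0 : E), MemKB ιE f e0 →
      ∃ c : ℕ → E, ∀ n, (fun a => bstar n (f a)) =ᵐ[μ] ⇑(ιE (c n))) ∧
    ∃ TY : (α → Y) → (β → Y),
      (∀ (f : α → Y) (e0 : E) (c : ℕ → E), MemKB ιE f e0 →
        (∀ n, (fun a => bstar n (f a)) =ᵐ[μ] ⇑(ιE (c n))) →
        -- the series `∑ₙ T⟨bₙ*, f⟩(b) bₙ` converges a.e. to `(T_Y f)(b)`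
        (∀ᵐ x ∂ν, Tendsto
            (fun N => ∑ n ∈ Finset.range N, (ιG (T (c n))) x • b n)
            atTop (𝓝 (TY f x))) ∧
        -- pointwise norm bound
        (∀ᵐ x ∂ν, ‖TY f x‖ ≤ K * (ιG (R e0)) x) ∧
        -- `T_Y f ∈ G(Y)`, with norm bound (boundedness of `T_Y`)
        (∃ g0 : G, MemKB ιG (TY f) g0 ∧ ‖g0‖ ≤ K * ‖R‖ * ‖e0‖) ∧
        -- the relation `⟨bₙ*, T_Y f⟩ = T⟨bₙ*, f⟩`
        (∀ n, (fun x => bstar n (TY f x)) =ᵐ[ν] ⇑(ιG (T (c n))))) ∧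
      -- `T_Y` is linear
      (∀ f g : α → Y, (∃ e : E, MemKB ιE f e) → (∃ e : E, MemKB ιE g e) →
        TY (f + g) =ᵐ[ν] TY f + TY g) ∧
      (∀ (r : ℝ) (f : α → Y), (∃ e : E, MemKB ιE f e) →
        TY (r • f) =ᵐ[ν] r • TY f) :=
  extension_via_boundedly_complete_basis_general ιE ιG hE hG T R hRpos hdom b bstar K hbiorth hK hbc
end
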